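/- arXiv:1809.06108 — 5 statements merged into one kernel-verified Lean document; each statement's English description precedes it below -/
import Mathlib

section
/- Let p ≤ q ≤ p + 1 and q ≤ 1/2 − μ, suppose Q(y − y^δ) ∈ N_{2q}, (TT*)^q Q y ≠ 0, x† satisfies the source condition of order μ, and let α* be a minimizer of α ↦ ψ_HD(α, y^δ) over (0,‖T‖²). Then there exist constants C > 0 and η₀ > 0 such that ‖x_{α*}^δ − x†‖ ≤ C η^{(2μ/(2μ+2p+1))·(2μ/(1−2q))} whenever η ≤ η₀. -/
open scoped BigOperators
open Set

noncomputable section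

namespace WeakNoise

/-! ### Sequence (spectral/diagonal) model of the weakly bounded noise setting

Since `T : X → Y` is a compact linear operator, `T T*` and `T* T` have a common
sequence of positive eigenvalues `lam i`, bounded by `Λ = ‖T‖²`, with
orthonormal eigenbases `u i` (of `T T*`, spanning `closure (range T)`) and
`v i` (of `T* T`, spanning `(ker T)ᗮ`).  We describe all data by their spectral
coefficients: `e i = ⟪y^δ - y, u i⟫` (so `y - y^δ` has coefficients `-e i`,
with the same squares), and `xdag i = ⟪x†, v i⟫` (note `x† ⟂ ker T`), so that
the exact data `y = T x†` has coefficients `√(lam i) * xdag i`.  All norms,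
functionals and conditions of the paper are expressed through their spectral
representations `∫ w(λ) d‖F_λ z‖² = ∑' i, w (lam i) * (coefficient of z at i)²`. -/

/-- squared weak noise level `η² = ‖(T T*)^p (y^δ - y)‖² = ∑ λᵢ^{2p} eᵢ²`. -/
def etaSq (lam e : ℕ → ℝ) (p : ℝ) : ℝ := ∑' i, lam i ^ (2 * p) * e i ^ 2

/-- weak noise level `η = ‖(T T*)^p (y^δ - y)‖`. -/
def eta (lam e : ℕ → ℝ) (p : ℝ) : ℝ := Real.sqrt (etaSq lam e p)

/-- `‖x_α^δ - x_α‖² = ∑ λᵢ eᵢ²/(λᵢ+α)²`. -/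
def dataErrSq (lam e : ℕ → ℝ) (α : ℝ) : ℝ := ∑' i, lam i * e i ^ 2 / (lam i + α) ^ 2

/-- `‖x_α^δ - x_α‖`. -/
def dataErr (lam e : ℕ → ℝ) (α : ℝ) : ℝ := Real.sqrt (dataErrSq lam e α)

/-- `‖x_α - x†‖² = ∑ α² xdagᵢ²/(λᵢ+α)²`. -/
def approxErrSq (lam xdag : ℕ → ℝ) (α : ℝ) : ℝ := ∑' i, α ^ 2 * xdag i ^ 2 / (lam i + α) ^ 2

/-- `‖x_α - x†‖`. -/
def approxErr (lam xdag : ℕ → ℝ) (α : ℝ) : ℝ := Real.sqrt (approxErrSq lam xdag α)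

/-- `‖T (x_α^δ - x_α)‖² = ∑ λᵢ² eᵢ²/(λᵢ+α)²`. -/
def TdataErrSq (lam e : ℕ → ℝ) (α : ℝ) : ℝ := ∑' i, lam i ^ 2 * e i ^ 2 / (lam i + α) ^ 2

/-- `‖T (x_α^δ - x_α)‖`. -/
def TdataErr (lam e : ℕ → ℝ) (α : ℝ) : ℝ := Real.sqrt (TdataErrSq lam e α)

/-- `‖T x_α - y‖² = ∑ α² λᵢ xdagᵢ²/(λᵢ+α)²`. -/
def TapproxErrSq (lam xdag : ℕ → ℝ) (α : ℝ) : ℝ :=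
  ∑' i, α ^ 2 * lam i * xdag i ^ 2 / (lam i + α) ^ 2

/-- `‖T x_α - y‖`. -/
def TapproxErr (lam xdag : ℕ → ℝ) (α : ℝ) : ℝ := Real.sqrt (TapproxErrSq lam xdag α)

/-- `‖x_α^δ - x†‖² = ∑ (√λᵢ eᵢ - α xdagᵢ)²/(λᵢ+α)²`. -/
def totalErrSq (lam xdag e : ℕ → ℝ) (α : ℝ) : ℝ :=
  ∑' i, (Real.sqrt (lam i) * e i - α * xdag i) ^ 2 / (lam i + α) ^ 2

/-- `‖x_α^δ - x†‖`. -/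
def totalErr (lam xdag e : ℕ → ℝ) (α : ℝ) : ℝ := Real.sqrt (totalErrSq lam xdag e α)

/-- spectral coefficients of the exact data `y = T x†`. -/
def yCoeff (lam xdag : ℕ → ℝ) : ℕ → ℝ := fun i => Real.sqrt (lam i) * xdag i

/-- spectral coefficients of the noisy data `y^δ`. -/
def ydCoeff (lam xdag e : ℕ → ℝ) : ℕ → ℝ := fun i => Real.sqrt (lam i) * xdag i + e i

/-- squared quasi-optimality functional `ψ_QO(α,z)² = ∑ α² λᵢ cᵢ²/(λᵢ+α)⁴`,
where `c` are the spectral coefficients of `z`. -/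
def psiQOsq (lam c : ℕ → ℝ) (α : ℝ) : ℝ := ∑' i, α ^ 2 * lam i * c i ^ 2 / (lam i + α) ^ 4

/-- quasi-optimality functional `ψ_QO(α,z)`. -/
def psiQO (lam c : ℕ → ℝ) (α : ℝ) : ℝ := Real.sqrt (psiQOsq lam c α)

/-- squared modified heuristic discrepancy functional
`ψ_HD(α,z)² = ∑ λᵢ^{2q} α^{1-2q} cᵢ²/(λᵢ+α)²`. -/
def psiHDsq (lam c : ℕ → ℝ) (q α : ℝ) : ℝ :=
  ∑' i, lam i ^ (2 * q) * α ^ (1 - 2 * q) * c i ^ 2 / (lam i + α) ^ 2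

/-- modified heuristic discrepancy functional `ψ_HD(α,z)`. -/
def psiHD (lam c : ℕ → ℝ) (q α : ℝ) : ℝ := Real.sqrt (psiHDsq lam c q α)

/-- squared modified Hanke-Raus functional
`ψ_HR(α,z)² = ∑ λᵢ^{2q} α^{2-2q} cᵢ²/(λᵢ+α)³`. -/
def psiHRsq (lam c : ℕ → ℝ) (q α : ℝ) : ℝ :=
  ∑' i, lam i ^ (2 * q) * α ^ (2 - 2 * q) * c i ^ 2 / (lam i + α) ^ 3

/-- modified Hanke-Raus functional `ψ_HR(α,z)`. -/
def psiHR (lam c : ℕ → ℝ) (q α : ℝ) : ℝ := Real.sqrt (psiHRsq lam c q α)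

/-- squared predictive mean-square error functional
`ψ_PMS(α,y^δ)² = ‖T x_α^δ - y‖² = ∑ (λᵢ eᵢ - α √λᵢ xdagᵢ)²/(λᵢ+α)²`. -/
def psiPMSsq (lam xdag e : ℕ → ℝ) (α : ℝ) : ℝ :=
  ∑' i, (lam i * e i - α * Real.sqrt (lam i) * xdag i) ^ 2 / (lam i + α) ^ 2

/-- predictive mean-square error functional `ψ_PMS(α,y^δ)`. -/
def psiPMS (lam xdag e : ℕ → ℝ) (α : ℝ) : ℝ := Real.sqrt (psiPMSsq lam xdag e α)

/-- the noise condition defining `N_ν`, with explicit constant `C`: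
`α^{ν+1} ∫_α^{‖T‖²} λ⁻¹ d‖F_λ e‖² ≤ C ∫_0^α λ^ν d‖F_λ e‖²` for all `α ∈ (0,‖T‖²)`. -/
def noiseCondC (lam c : ℕ → ℝ) (Λ ν C : ℝ) : Prop :=
  ∀ α ∈ Set.Ioo (0 : ℝ) Λ,
    α ^ (ν + 1) * ∑' i, (if α < lam i then c i ^ 2 / lam i else 0)
      ≤ C * ∑' i, (if lam i ≤ α then lam i ^ ν * c i ^ 2 else 0)

/-- membership in the noise class `N_ν`. -/
def memN (lam c : ℕ → ℝ) (Λ ν : ℝ) : Prop := ∃ C > 0, noiseCondC lam c Λ ν C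

/-- the regularity condition on `x†`:
`α² ∫_α^∞ λ⁻² d‖E_λ x†‖² ≥ C ∫_0^α d‖E_λ x†‖²` for all `α ∈ (0,‖T‖²)`. -/
def regCond (lam xdag : ℕ → ℝ) (Λ : ℝ) : Prop :=
  ∃ C > 0, ∀ α ∈ Set.Ioo (0 : ℝ) Λ,
    C * ∑' i, (if lam i ≤ α then xdag i ^ 2 else 0)
      ≤ α ^ 2 * ∑' i, (if α < lam i then xdag i ^ 2 / lam i ^ 2 else 0)

/-- the noise condition (regcon) with parameter `ε > 0` and explicit constant `C`:
`∫_α^{‖T‖²} d‖F_λ Q(y-y^δ)‖² ≥ C η²/α^{2p-ε}` for all `α ∈ (0,‖T‖²)`. -/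
def regconC (lam e : ℕ → ℝ) (Λ p ε C : ℝ) : Prop :=
  ∀ α ∈ Set.Ioo (0 : ℝ) Λ,
    C * etaSq lam e p / α ^ (2 * p - ε) ≤ ∑' i, (if α < lam i then e i ^ 2 else 0)

/-- condition (xxx) with parameter `ε₂ > 0` and explicit constant `C`:
`∫_α^{‖T‖²} λ^{2μ-1} d‖E_λ ω‖² ≥ C α^{2μ-1+ε₂}` for all `α ∈ (0,‖T‖²)`. -/
def xxxCondC (lam om : ℕ → ℝ) (Λ mu eps2 C : ℝ) : Prop :=
  ∀ α ∈ Set.Ioo (0 : ℝ) Λ,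
    C * α ^ (2 * mu - 1 + eps2) ≤ ∑' i, (if α < lam i then lam i ^ (2 * mu - 1) * om i ^ 2 else 0)



/-!
The minimiser `α*` of `ψ_HD(·, y^δ)` is squeezed from both sides. Comparing with the a-priori
choice `α = η^{2/(2μ+2p+1)}`, and using `ψ_HD(α, y)² ≲ α^{2μ}` (source condition) and
`ψ_HD(α, y^δ - y)² ≲ η² α^{-(1+2p)}` (weak noise level), gives
`ψ_HD(α*, y^δ)² ≲ η^{4μ/(2μ+2p+1)}`. Since `(TT*)^q Q y ≠ 0`, `ψ_HD(α, y)² ≳ α^{1-2q}`, so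
either `α*^{1-2q}` is bounded by that rate or `α*^{2+2p-2q} ≲ η²`; in both cases
`α*^{2μ} ≲ η^{2 · 2μ/(2μ+2p+1) · 2μ/(1-2q)}`. Finally the noise condition `N_{2q}` bounds the
data error `‖x_{α*}^δ - x_{α*}‖²` by `ψ_HD(α*, y^δ - y)²`, and the approximation error is
`≲ α*^{2μ}`.
-/

lemma rpow_mul_rpow_le_add_sq {a b s : ℝ} (ha : 0 ≤ a) (hb : 0 ≤ b) (hs0 : 0 ≤ s)
    (hs2 : s ≤ 2) : a ^ s * b ^ (2 - s) ≤ (a + b) ^ 2 := by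
  calc a ^ s * b ^ (2 - s) ≤ (a + b) ^ s * (a + b) ^ (2 - s) := by
        gcongr <;> linarith
    _ = (a + b) ^ 2 := by
        rw [← Real.rpow_add' (by positivity) (by norm_num), add_sub_cancel, Real.rpow_two]

lemma rpow_mul_rpow_div_add_sq_le {l α a b a' b' : ℝ} (hl : 0 < l) (hα : 0 < α)
    (hab : a + b = a' + b' + 2) (ha' : a' ≤ a) (ha : a ≤ a' + 2) :
    l ^ a * α ^ b / (l + α) ^ 2 ≤ l ^ a' * α ^ b' := by
  have hl' : l ^ a = l ^ a' * l ^ (a - a') := by rw [← Real.rpow_add hl, add_sub_cancel]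
  have hα' : α ^ b = α ^ b' * α ^ (2 - (a - a')) := by
    rw [← Real.rpow_add hα]; congr 1; linarith
  rw [hl', hα', div_le_iff₀ (by positivity)]
  calc l ^ a' * l ^ (a - a') * (α ^ b' * α ^ (2 - (a - a')))
      = l ^ a' * α ^ b' * (l ^ (a - a') * α ^ (2 - (a - a'))) := by ring
    _ ≤ l ^ a' * α ^ b' * (l + α) ^ 2 := by
        gcongr
        exact rpow_mul_rpow_le_add_sq hl.le hα.le (by linarith) (by linarith)

lemma tsum_le_tsum_of_nonneg {ι : Type*} {f g : ι → ℝ} (hf : ∀ i, 0 ≤ f i)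
    (hfg : ∀ i, f i ≤ g i) (hg : Summable g) : ∑' i, f i ≤ ∑' i, g i :=
  Summable.tsum_le_tsum hfg (hg.of_nonneg_of_le hf hfg) hg

lemma mul_add_sq_le {w a b : ℝ} (hw : 0 ≤ w) :
    w * (a + b) ^ 2 ≤ 2 * (w * a ^ 2 + w * b ^ 2) := by
  nlinarith [mul_le_mul_of_nonneg_left (add_sq_le (a := a) (b := b)) hw]

section WeightedSquares

variable {ι : Type*} {w a b : ι → ℝ}

lemma summable_mul_add_sq (hw : ∀ i, 0 ≤ w i) (ha : Summable fun i => w i * a i ^ 2)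
    (hb : Summable fun i => w i * b i ^ 2) : Summable fun i => w i * (a i + b i) ^ 2 :=
  ((ha.add hb).mul_left 2).of_nonneg_of_le (fun i => mul_nonneg (hw i) (sq_nonneg _))
    fun i => mul_add_sq_le (hw i)

lemma tsum_mul_add_sq_le (hw : ∀ i, 0 ≤ w i) (ha : Summable fun i => w i * a i ^ 2)
    (hb : Summable fun i => w i * b i ^ 2) :
    ∑' i, w i * (a i + b i) ^ 2 ≤ 2 * ∑' i, w i * a i ^ 2 + 2 * ∑' i, w i * b i ^ 2 := by
  rw [← mul_add, ← Summable.tsum_add ha hb, ← tsum_mul_left]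
  exact Summable.tsum_le_tsum
    (fun i => mul_add_sq_le (hw i))
    (summable_mul_add_sq hw ha hb) ((ha.add hb).mul_left 2)

end WeightedSquares

section Tradeoff

variable {a c η ν r s Λ : ℝ}

lemma mul_rpow_rpow {X t u : ℝ} (hX : 0 ≤ X) (hη : 0 ≤ η) :
    (X * η ^ t) ^ u = X ^ u * η ^ (t * u) := by
  rw [Real.mul_rpow hX (Real.rpow_nonneg hη _), ← Real.rpow_mul hη]

open Filter Topology in
lemma le_mul_rpow_of_forall_le_tradeoff {ψ A B : ℝ} (hB : 0 ≤ B) (hν : 0 ≤ ν) (hr : 0 < r)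
    (hη : 0 ≤ η) (hηΛ : η ^ (2 / (ν + r)) < Λ)
    (h : ∀ β ∈ Set.Ioo 0 Λ, ψ ≤ A * β ^ ν + B * η ^ 2 * β ^ (-r)) :
    ψ ≤ (A + B) * η ^ (2 * (ν / (ν + r))) := by
  rcases hη.eq_or_lt with rfl | hηpos
  · have hΛ : 0 < Λ := (Real.rpow_nonneg le_rfl _).trans_lt hηΛ
    have h0 : ∀ β ∈ Set.Ioo 0 Λ, ψ ≤ A * β ^ ν := fun β hβ => by simpa using h β hβ
    rcases hν.eq_or_lt with rfl | hνpos
    · have := h0 (Λ / 2) ⟨by linarith, by linarith⟩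
      simp only [Real.rpow_zero, zero_div, mul_zero] at this ⊢
      linarith
    · rw [Real.zero_rpow (by positivity), mul_zero]
      have ht : Tendsto (fun β => A * β ^ ν) (𝓝[>] 0) (𝓝 0) := by
        have := ((Real.continuousAt_rpow_const 0 ν (Or.inr hν)).const_mul A).tendsto
        rw [Real.zero_rpow hνpos.ne', mul_zero] at this
        exact tendsto_nhdsWithin_of_tendsto_nhds this
      refine ge_of_tendsto ht ?_
      filter_upwards [Ioo_mem_nhdsGT hΛ] with β hβ using h0 β hβ
  · have hνr : 0 < ν + r := by linarith
    set β := η ^ (2 / (ν + r))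
    have hbias : β ^ ν = η ^ (2 * (ν / (ν + r))) := by
      rw [← Real.rpow_mul hη]; ring_nf
    have hnoise : η ^ 2 * β ^ (-r) = η ^ (2 * (ν / (ν + r))) := by
      rw [← Real.rpow_mul hη, ← Real.rpow_two, ← Real.rpow_add hηpos]
      congr 1; field_simp; ring
    calc ψ ≤ A * β ^ ν + B * η ^ 2 * β ^ (-r) :=
          h β ⟨Real.rpow_pos_of_pos hηpos _, hηΛ⟩
      _ = (A + B) * η ^ (2 * (ν / (ν + r))) := by rw [mul_assoc B, hbias, hnoise]; ring

lemma rpow_le_of_mul_rpow_le {M : ℝ} (ha : 0 < a) (hc : 0 < c) (hs : 0 < s) (hν : 0 ≤ ν)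
    (h : c * a ^ s ≤ M) : a ^ ν ≤ (M / c) ^ (ν / s) := by
  calc a ^ ν = (a ^ s) ^ (ν / s) := by rw [← Real.rpow_mul ha.le, mul_div_cancel₀ _ hs.ne']
    _ ≤ (M / c) ^ (ν / s) := by
        gcongr
        rw [le_div_iff₀ hc]; linarith

lemma rpow_le_mul_rpow_of_le_tradeoff {K B : ℝ} (ha : 0 < a) (hη0 : 0 ≤ η) (hη1 : η ≤ 1)
    (hc : 0 < c) (hK : 0 ≤ K) (hB : 0 ≤ B) (hr : 0 < r) (hν : 0 ≤ ν) (hνs : ν ≤ s)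
    (h : c * a ^ s ≤ K * η ^ (2 * (ν / (ν + r))) + B * η ^ 2 * a ^ (-r)) :
    a ^ ν ≤ ((2 * K / c) ^ (ν / s) + (2 * B / c) ^ (ν / (s + r)))
      * η ^ (2 * (ν / (ν + r) * (ν / s))) := by
  rcases hν.eq_or_lt with rfl | hνpos
  · norm_num
  have hs : 0 < s := hνpos.trans_le hνs
  have hX : 0 ≤ (2 * K / c) ^ (ν / s) := by positivity
  have hY : 0 ≤ (2 * B / c) ^ (ν / (s + r)) := by positivity
  have hη : 0 ≤ η ^ (2 * (ν / (ν + r) * (ν / s))) := by positivity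
  rcases le_total (B * η ^ 2 * a ^ (-r)) (K * η ^ (2 * (ν / (ν + r)))) with hle | hle
  · have hbias := rpow_le_of_mul_rpow_le ha hc hs hν
      (M := 2 * K * η ^ (2 * (ν / (ν + r)))) (by linarith)
    rw [mul_div_right_comm, mul_rpow_rpow (by positivity) hη0, mul_assoc 2] at hbias
    nlinarith
  · have hnoise : c * a ^ (s + r) ≤ 2 * B * η ^ 2 := by
      have hr' : a ^ (-r) * a ^ r = 1 := by
        rw [← Real.rpow_add ha, neg_add_cancel, Real.rpow_zero]
      calc c * a ^ (s + r) = c * a ^ s * a ^ r := by rw [Real.rpow_add ha]; ring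
        _ ≤ 2 * B * η ^ 2 * a ^ (-r) * a ^ r :=
            mul_le_mul_of_nonneg_right (by linarith) (by positivity)
        _ = 2 * B * η ^ 2 := by rw [mul_assoc _ (a ^ (-r)), hr', mul_one]
    have hrate := rpow_le_of_mul_rpow_le ha hc (by linarith) hν hnoise
    rw [mul_div_right_comm, ← Real.rpow_two, mul_rpow_rpow (by positivity) hη0] at hrate
    have hexp : ν / (ν + r) * (ν / s) ≤ ν / (s + r) := by
      rw [div_mul_div_comm, div_le_div_iff₀ (by positivity) (by positivity)]
      nlinarith [mul_nonneg (mul_nonneg hν hr.le) (sub_nonneg.2 hνs)]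
    have hηle : η ^ (2 * (ν / (s + r))) ≤ η ^ (2 * (ν / (ν + r) * (ν / s))) :=
      Real.rpow_le_rpow_of_exponent_ge' hη0 hη1 (by positivity) (by linarith)
    nlinarith [mul_le_mul_of_nonneg_left hηle hY]

end Tradeoff

def hdWeight (q α l : ℝ) : ℝ := l ^ (2 * q) * α ^ (1 - 2 * q) / (l + α) ^ 2

section HeuristicDiscrepancy

variable {lam a b e : ℕ → ℝ} {p q α l : ℝ}

lemma psiHDsq_eq_tsum (lam c : ℕ → ℝ) (q α : ℝ) :
    psiHDsq lam c q α = ∑' i, hdWeight q α (lam i) * c i ^ 2 :=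
  tsum_congr fun i => by rw [hdWeight]; ring

lemma hdWeight_nonneg (hl : 0 < l) (hα : 0 < α) : 0 ≤ hdWeight q α l := by
  unfold hdWeight; positivity

lemma psiHDsq_nonneg (hlam : ∀ i, 0 < lam i) (hα : 0 < α) (c : ℕ → ℝ) :
    0 ≤ psiHDsq lam c q α := by
  rw [psiHDsq_eq_tsum]
  exact tsum_nonneg fun i => mul_nonneg (hdWeight_nonneg (hlam i) hα) (sq_nonneg _)

lemma psiHDsq_neg (lam c : ℕ → ℝ) (q α : ℝ) :
    psiHDsq lam (-c) q α = psiHDsq lam c q α := by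
  simp only [psiHDsq_eq_tsum, Pi.neg_apply, neg_sq]

lemma psiHDsq_add_le (hlam : ∀ i, 0 < lam i) (hα : 0 < α)
    (ha : Summable fun i => hdWeight q α (lam i) * a i ^ 2)
    (hb : Summable fun i => hdWeight q α (lam i) * b i ^ 2) :
    psiHDsq lam (a + b) q α ≤ 2 * psiHDsq lam a q α + 2 * psiHDsq lam b q α := by
  simp only [psiHDsq_eq_tsum, Pi.add_apply]
  exact tsum_mul_add_sq_le (fun i => hdWeight_nonneg (hlam i) hα) ha hb

lemma psiHDsq_le_add (hlam : ∀ i, 0 < lam i) (hα : 0 < α)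
    (ha : Summable fun i => hdWeight q α (lam i) * a i ^ 2)
    (hb : Summable fun i => hdWeight q α (lam i) * b i ^ 2) :
    psiHDsq lam a q α ≤ 2 * psiHDsq lam (a + b) q α + 2 * psiHDsq lam b q α := by
  have hab := summable_mul_add_sq (fun i => hdWeight_nonneg (hlam i) hα) ha hb
  have hnb : Summable fun i => hdWeight q α (lam i) * (-b) i ^ 2 := by
    simpa only [Pi.neg_apply, neg_sq] using hb
  calc psiHDsq lam a q α = psiHDsq lam ((a + b) + -b) q α := by rw [add_neg_cancel_right]
    _ ≤ 2 * psiHDsq lam (a + b) q α + 2 * psiHDsq lam (-b) q α :=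
        psiHDsq_add_le hlam hα hab hnb
    _ = 2 * psiHDsq lam (a + b) q α + 2 * psiHDsq lam b q α := by rw [psiHDsq_neg]

lemma hdWeight_mul_sq_le (hl : 0 < l) (hα : 0 < α) (hpq : p ≤ q) (hqp : q ≤ p + 1) (c : ℝ) :
    hdWeight q α l * c ^ 2 ≤ α ^ (-(1 + 2 * p)) * (l ^ (2 * p) * c ^ 2) :=
  calc hdWeight q α l * c ^ 2 ≤ l ^ (2 * p) * α ^ (-(1 + 2 * p)) * c ^ 2 := by
        gcongr
        exact rpow_mul_rpow_div_add_sq_le hl hα (by ring) (by linarith) (by linarith)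
    _ = α ^ (-(1 + 2 * p)) * (l ^ (2 * p) * c ^ 2) := by ring

lemma summable_hdWeight_mul_sq_of_summable (hlam : ∀ i, 0 < lam i) (hα : 0 < α)
    (hpq : p ≤ q) (hqp : q ≤ p + 1) (he : Summable fun i => lam i ^ (2 * p) * e i ^ 2) :
    Summable fun i => hdWeight q α (lam i) * e i ^ 2 :=
  (he.mul_left _).of_nonneg_of_le
    (fun i => mul_nonneg (hdWeight_nonneg (hlam i) hα) (sq_nonneg _))
    fun i => hdWeight_mul_sq_le (hlam i) hα hpq hqp (e i)

lemma psiHDsq_le_etaSq (hlam : ∀ i, 0 < lam i) (hα : 0 < α) (hpq : p ≤ q) (hqp : q ≤ p + 1)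
    (he : Summable fun i => lam i ^ (2 * p) * e i ^ 2) :
    psiHDsq lam e q α ≤ α ^ (-(1 + 2 * p)) * etaSq lam e p := by
  rw [psiHDsq_eq_tsum, etaSq, ← tsum_mul_left]
  exact tsum_le_tsum_of_nonneg (fun i => mul_nonneg (hdWeight_nonneg (hlam i) hα) (sq_nonneg _))
    (fun i => hdWeight_mul_sq_le (hlam i) hα hpq hqp (e i)) (he.mul_left _)

end HeuristicDiscrepancy

section ExactData

variable {lam xdag ω : ℕ → ℝ} {q μ α Λ l : ℝ} {i : ℕ}

lemma rpow_pow_two (hl : 0 ≤ l) (μ : ℝ) : (l ^ μ) ^ 2 = l ^ (2 * μ) := by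
  rw [← Real.rpow_mul_natCast hl, mul_comm]; norm_num

lemma yCoeff_sq (hl : 0 < lam i) (hsrc : xdag i = lam i ^ μ * ω i) :
    yCoeff lam xdag i ^ 2 = lam i ^ (2 * μ + 1) * ω i ^ 2 := by
  rw [yCoeff, hsrc, mul_pow, mul_pow, Real.sq_sqrt hl.le, rpow_pow_two hl.le,
    Real.rpow_add_one hl.ne']
  ring

lemma hdWeight_mul_yCoeff_sq_le (hl : 0 < lam i) (hα : 0 < α) (hsrc : xdag i = lam i ^ μ * ω i)
    (hq : 0 ≤ q) (hμ : 0 ≤ μ) (hqμ : q ≤ 1 / 2 - μ) :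
    hdWeight q α (lam i) * yCoeff lam xdag i ^ 2 ≤ α ^ (2 * μ) * ω i ^ 2 := by
  have hw : hdWeight q α (lam i) * lam i ^ (2 * μ + 1) ≤ α ^ (2 * μ) := by
    have h := rpow_mul_rpow_div_add_sq_le (a := 2 * q + (2 * μ + 1)) (b := 1 - 2 * q)
      (a' := 0) (b' := 2 * μ) hl hα (by ring) (by linarith) (by linarith)
    rw [Real.rpow_zero, one_mul, Real.rpow_add hl] at h
    calc hdWeight q α (lam i) * lam i ^ (2 * μ + 1)
        = lam i ^ (2 * q) * lam i ^ (2 * μ + 1) * α ^ (1 - 2 * q) / (lam i + α) ^ 2 := by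
          rw [hdWeight]; ring
      _ ≤ α ^ (2 * μ) := h
  calc hdWeight q α (lam i) * yCoeff lam xdag i ^ 2
      = hdWeight q α (lam i) * lam i ^ (2 * μ + 1) * ω i ^ 2 := by rw [yCoeff_sq hl hsrc]; ring
    _ ≤ α ^ (2 * μ) * ω i ^ 2 := by gcongr

lemma summable_hdWeight_mul_yCoeff_sq (hlam : ∀ i, 0 < lam i) (hα : 0 < α)
    (hsrc : ∀ i, xdag i = lam i ^ μ * ω i) (hω : Summable fun i => ω i ^ 2)
    (hq : 0 ≤ q) (hμ : 0 ≤ μ) (hqμ : q ≤ 1 / 2 - μ) :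
    Summable fun i => hdWeight q α (lam i) * yCoeff lam xdag i ^ 2 :=
  (hω.mul_left _).of_nonneg_of_le
    (fun i => mul_nonneg (hdWeight_nonneg (hlam i) hα) (sq_nonneg _))
    fun i => hdWeight_mul_yCoeff_sq_le (hlam i) hα (hsrc i) hq hμ hqμ

lemma psiHDsq_yCoeff_le (hlam : ∀ i, 0 < lam i) (hα : 0 < α)
    (hsrc : ∀ i, xdag i = lam i ^ μ * ω i) (hω : Summable fun i => ω i ^ 2)
    (hq : 0 ≤ q) (hμ : 0 ≤ μ) (hqμ : q ≤ 1 / 2 - μ) :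
    psiHDsq lam (yCoeff lam xdag) q α ≤ α ^ (2 * μ) * ∑' i, ω i ^ 2 := by
  rw [psiHDsq_eq_tsum, ← tsum_mul_left]
  exact tsum_le_tsum_of_nonneg (fun i => mul_nonneg (hdWeight_nonneg (hlam i) hα) (sq_nonneg _))
    (fun i => hdWeight_mul_yCoeff_sq_le (hlam i) hα (hsrc i) hq hμ hqμ) (hω.mul_left _)

lemma mul_rpow_le_psiHDsq {c : ℕ → ℝ} (hlam : ∀ i, 0 < lam i ∧ lam i ≤ Λ)
    (hα : α ∈ Set.Ioo 0 Λ) (hc : Summable fun i => hdWeight q α (lam i) * c i ^ 2) (i : ℕ) :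
    lam i ^ (2 * q) * c i ^ 2 / (4 * Λ ^ 2) * α ^ (1 - 2 * q) ≤ psiHDsq lam c q α := by
  obtain ⟨hl, hlΛ⟩ := hlam i
  rw [psiHDsq_eq_tsum]
  refine le_trans ?_ (hc.le_tsum i fun j _ =>
    mul_nonneg (hdWeight_nonneg (hlam j).1 hα.1) (sq_nonneg _))
  have hden : (lam i + α) ^ 2 ≤ 4 * Λ ^ 2 := by nlinarith [hα.1, hα.2]
  calc lam i ^ (2 * q) * c i ^ 2 / (4 * Λ ^ 2) * α ^ (1 - 2 * q)
      = lam i ^ (2 * q) * α ^ (1 - 2 * q) * c i ^ 2 / (4 * Λ ^ 2) := by ring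
    _ ≤ lam i ^ (2 * q) * α ^ (1 - 2 * q) * c i ^ 2 / (lam i + α) ^ 2 := by
        have := hα.1; gcongr
    _ = hdWeight q α (lam i) * c i ^ 2 := by rw [hdWeight]; ring

lemma exists_pos_mul_rpow_le_psiHDsq_yCoeff (hlam : ∀ i, 0 < lam i ∧ lam i ≤ Λ)
    (hsrc : ∀ i, xdag i = lam i ^ μ * ω i) (hω : Summable fun i => ω i ^ 2)
    (hq : 0 ≤ q) (hμ : 0 ≤ μ) (hqμ : q ≤ 1 / 2 - μ) (hx : ∃ i, xdag i ≠ 0) :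
    ∃ c > 0, ∀ α ∈ Set.Ioo 0 Λ,
      c * α ^ (1 - 2 * q) ≤ psiHDsq lam (yCoeff lam xdag) q α := by
  obtain ⟨i, hi⟩ := hx
  obtain ⟨hl, hlΛ⟩ := hlam i
  have hΛ : 0 < Λ := hl.trans_le hlΛ
  have hy : yCoeff lam xdag i ≠ 0 := mul_ne_zero (Real.sqrt_pos.2 hl).ne' hi
  exact ⟨lam i ^ (2 * q) * yCoeff lam xdag i ^ 2 / (4 * Λ ^ 2), by positivity, fun α hα =>
    mul_rpow_le_psiHDsq hlam hα
      (summable_hdWeight_mul_yCoeff_sq (fun j => (hlam j).1) hα.1 hsrc hω hq hμ hqμ) i⟩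

lemma approxErr_summand_le (hl : 0 < l) (hα : 0 < α) (hμ0 : 0 ≤ μ) (hμ1 : μ ≤ 1)
    (w : ℝ) :
    α ^ 2 * (l ^ μ * w) ^ 2 / (l + α) ^ 2 ≤ α ^ (2 * μ) * w ^ 2 := by
  have h := rpow_mul_rpow_div_add_sq_le (a := 2 * μ) (b := 2) (a' := 0) (b' := 2 * μ) hl hα
    (by ring) (by linarith) (by linarith)
  rw [Real.rpow_zero, one_mul, Real.rpow_two] at h
  calc α ^ 2 * (l ^ μ * w) ^ 2 / (l + α) ^ 2 = l ^ (2 * μ) * α ^ 2 / (l + α) ^ 2 * w ^ 2 := by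
        rw [mul_pow, rpow_pow_two hl.le]; ring
    _ ≤ α ^ (2 * μ) * w ^ 2 := by gcongr

lemma summable_approxErr (hlam : ∀ i, 0 < lam i) (hα : 0 < α)
    (hsrc : ∀ i, xdag i = lam i ^ μ * ω i) (hω : Summable fun i => ω i ^ 2)
    (hμ0 : 0 ≤ μ) (hμ1 : μ ≤ 1) :
    Summable fun i => α ^ 2 * xdag i ^ 2 / (lam i + α) ^ 2 :=
  (hω.mul_left _).of_nonneg_of_le (fun i => by positivity)
    fun i => hsrc i ▸ approxErr_summand_le (hlam i) hα hμ0 hμ1 (ω i)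

lemma approxErrSq_le (hlam : ∀ i, 0 < lam i) (hα : 0 < α)
    (hsrc : ∀ i, xdag i = lam i ^ μ * ω i) (hω : Summable fun i => ω i ^ 2)
    (hμ0 : 0 ≤ μ) (hμ1 : μ ≤ 1) :
    approxErrSq lam xdag α ≤ α ^ (2 * μ) * ∑' i, ω i ^ 2 := by
  rw [approxErrSq, ← tsum_mul_left]
  exact tsum_le_tsum_of_nonneg (fun i => by positivity)
    (fun i => hsrc i ▸ approxErr_summand_le (hlam i) hα hμ0 hμ1 (ω i)) (hω.mul_left _)

end ExactData

section NoiseError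

variable {lam e xdag : ℕ → ℝ} {p q α Λ CN l : ℝ}

lemma dataErr_summand_le (hl : 0 < l) (hα : 0 < α) (hq : q ≤ 1 / 2) (c : ℝ) :
    l * c ^ 2 / (l + α) ^ 2 ≤ hdWeight q α l * c ^ 2 + (if α < l then c ^ 2 / l else 0) := by
  split_ifs with h
  · have hw := mul_nonneg (hdWeight_nonneg (q := q) hl hα) (sq_nonneg c)
    have hhigh : l * c ^ 2 / (l + α) ^ 2 ≤ c ^ 2 / l :=
      calc l * c ^ 2 / (l + α) ^ 2 ≤ l * c ^ 2 / l ^ 2 := by gcongr; linarith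
        _ = c ^ 2 / l := by field_simp
    linarith
  · have hsplit : l = l ^ (2 * q) * l ^ (1 - 2 * q) := by
      rw [← Real.rpow_add hl, add_sub_cancel, Real.rpow_one]
    have hlow : l ^ (1 - 2 * q) ≤ α ^ (1 - 2 * q) :=
      Real.rpow_le_rpow hl.le (not_lt.mp h) (by linarith)
    calc l * c ^ 2 / (l + α) ^ 2 = l ^ (2 * q) * l ^ (1 - 2 * q) * c ^ 2 / (l + α) ^ 2 := by
          rw [← hsplit]
      _ ≤ l ^ (2 * q) * α ^ (1 - 2 * q) * c ^ 2 / (l + α) ^ 2 := by gcongr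
      _ = hdWeight q α l * c ^ 2 + 0 := by rw [hdWeight]; ring

lemma lowFreq_le_hdWeight (hl : 0 < l) (hα : 0 < α) (c : ℝ) :
    (if l ≤ α then l ^ (2 * q) * c ^ 2 else 0)
      ≤ 4 * α ^ (2 * q + 1) * (hdWeight q α l * c ^ 2) := by
  split_ifs with h
  · have hα2 : α ^ (2 * q + 1) * α ^ (1 - 2 * q) = α ^ 2 := by
      rw [← Real.rpow_add hα, ← Real.rpow_two]; ring_nf
    calc l ^ (2 * q) * c ^ 2 ≤ l ^ (2 * q) * c ^ 2 * (4 * α ^ 2 / (l + α) ^ 2) :=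
          le_mul_of_one_le_right (by positivity) (by rw [one_le_div (by positivity)]; nlinarith)
      _ = 4 * (α ^ (2 * q + 1) * α ^ (1 - 2 * q)) * (l ^ (2 * q) * c ^ 2 / (l + α) ^ 2) := by
          rw [hα2]; ring
      _ = 4 * α ^ (2 * q + 1) * (hdWeight q α l * c ^ 2) := by rw [hdWeight]; ring
  · unfold hdWeight; positivity

lemma highFreq_le_rpow (hl : 0 < l) (hα : 0 < α) (hp : 0 ≤ p) (c : ℝ) :
    (if α < l then c ^ 2 / l else 0) ≤ α ^ (-(1 + 2 * p)) * (l ^ (2 * p) * c ^ 2) := by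
  split_ifs with h
  · have hpow : l ^ (-(1 + 2 * p)) ≤ α ^ (-(1 + 2 * p)) :=
      Real.rpow_le_rpow_of_nonpos hα h.le (by linarith)
    calc c ^ 2 / l = l ^ (-(1 + 2 * p)) * (l ^ (2 * p) * c ^ 2) := by
          rw [← mul_assoc, ← Real.rpow_add hl, show -(1 + 2 * p) + 2 * p = -1 by ring,
            Real.rpow_neg_one]
          ring
      _ ≤ α ^ (-(1 + 2 * p)) * (l ^ (2 * p) * c ^ 2) := by gcongr
  · positivity

lemma summable_highFreq (hlam : ∀ i, 0 < lam i) (hα : 0 < α) (hp : 0 ≤ p)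
    (he : Summable fun i => lam i ^ (2 * p) * e i ^ 2) :
    Summable fun i => if α < lam i then e i ^ 2 / lam i else 0 :=
  (he.mul_left _).of_nonneg_of_le
    (fun i => ite_nonneg (div_nonneg (sq_nonneg _) (hlam i).le) le_rfl)
    fun i => highFreq_le_rpow (hlam i) hα hp (e i)

lemma summable_dataErr (hlam : ∀ i, 0 < lam i) (hα : 0 < α) (hp : 0 ≤ p) (hpq : p ≤ q)
    (hqp : q ≤ p + 1) (hq : q ≤ 1 / 2) (he : Summable fun i => lam i ^ (2 * p) * e i ^ 2) :
    Summable fun i => lam i * e i ^ 2 / (lam i + α) ^ 2 :=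
  ((summable_hdWeight_mul_sq_of_summable hlam hα hpq hqp he).add
    (summable_highFreq hlam hα hp he)).of_nonneg_of_le
    (fun i => div_nonneg (mul_nonneg (hlam i).le (sq_nonneg _)) (sq_nonneg _))
    fun i => dataErr_summand_le (hlam i) hα hq (e i)

lemma dataErrSq_le (hlam : ∀ i, 0 < lam i) (hα : α ∈ Set.Ioo 0 Λ) (hp : 0 ≤ p)
    (hpq : p ≤ q) (hqp : q ≤ p + 1) (hq : q ≤ 1 / 2)
    (he : Summable fun i => lam i ^ (2 * p) * e i ^ 2)
    (hnc : noiseCondC lam e Λ (2 * q) CN) (hCN : 0 ≤ CN) :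
    dataErrSq lam e α ≤ (1 + 4 * CN) * psiHDsq lam e q α := by
  have hw : ∀ i, 0 ≤ hdWeight q α (lam i) * e i ^ 2 :=
    fun i => mul_nonneg (hdWeight_nonneg (hlam i) hα.1) (sq_nonneg _)
  have hψ := summable_hdWeight_mul_sq_of_summable hlam hα.1 hpq hqp he
  have hH := summable_highFreq hlam hα.1 hp he
  have hL : ∑' i, (if lam i ≤ α then lam i ^ (2 * q) * e i ^ 2 else 0)
      ≤ 4 * α ^ (2 * q + 1) * psiHDsq lam e q α := by
    rw [psiHDsq_eq_tsum, ← tsum_mul_left]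
    exact tsum_le_tsum_of_nonneg
      (fun i => ite_nonneg (mul_nonneg (Real.rpow_nonneg (hlam i).le _) (sq_nonneg _)) le_rfl)
      (fun i => lowFreq_le_hdWeight (hlam i) hα.1 (e i)) (hψ.mul_left _)
  have hHψ : ∑' i, (if α < lam i then e i ^ 2 / lam i else 0)
      ≤ 4 * CN * psiHDsq lam e q α := by
    refine le_of_mul_le_mul_left ?_ (Real.rpow_pos_of_pos hα.1 (2 * q + 1))
    calc α ^ (2 * q + 1) * ∑' i, (if α < lam i then e i ^ 2 / lam i else 0)
        ≤ CN * ∑' i, (if lam i ≤ α then lam i ^ (2 * q) * e i ^ 2 else 0) := hnc α hα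
      _ ≤ CN * (4 * α ^ (2 * q + 1) * psiHDsq lam e q α) := by gcongr
      _ = α ^ (2 * q + 1) * (4 * CN * psiHDsq lam e q α) := by ring
  calc dataErrSq lam e α
      ≤ psiHDsq lam e q α + ∑' i, (if α < lam i then e i ^ 2 / lam i else 0) := by
        rw [dataErrSq, psiHDsq_eq_tsum, ← Summable.tsum_add hψ hH]
        exact tsum_le_tsum_of_nonneg
          (fun i => div_nonneg (mul_nonneg (hlam i).le (sq_nonneg _)) (sq_nonneg _))
          (fun i => dataErr_summand_le (hlam i) hα.1 hq (e i)) (hψ.add hH)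
    _ ≤ (1 + 4 * CN) * psiHDsq lam e q α := by linarith

lemma totalErr_summand_le (hl : 0 < l) (α x c : ℝ) :
    (Real.sqrt l * c - α * x) ^ 2 / (l + α) ^ 2
      ≤ 2 * (l * c ^ 2 / (l + α) ^ 2) + 2 * (α ^ 2 * x ^ 2 / (l + α) ^ 2) := by
  calc (Real.sqrt l * c - α * x) ^ 2 / (l + α) ^ 2
      ≤ 2 * ((Real.sqrt l * c) ^ 2 + (α * x) ^ 2) / (l + α) ^ 2 := by
        gcongr; rw [sub_eq_add_neg, ← neg_sq (α * x)]; exact add_sq_le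
    _ = 2 * (l * c ^ 2 / (l + α) ^ 2) + 2 * (α ^ 2 * x ^ 2 / (l + α) ^ 2) := by
        rw [mul_pow, Real.sq_sqrt hl.le]; ring

lemma totalErrSq_le (hlam : ∀ i, 0 < lam i)
    (hd : Summable fun i => lam i * e i ^ 2 / (lam i + α) ^ 2)
    (ha : Summable fun i => α ^ 2 * xdag i ^ 2 / (lam i + α) ^ 2) :
    totalErrSq lam xdag e α ≤ 2 * dataErrSq lam e α + 2 * approxErrSq lam xdag α := by
  rw [totalErrSq, dataErrSq, approxErrSq, ← tsum_mul_left, ← tsum_mul_left,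
    ← Summable.tsum_add (hd.mul_left 2) (ha.mul_left 2)]
  exact tsum_le_tsum_of_nonneg (fun i => by positivity)
    (fun i => totalErr_summand_le (hlam i) α (xdag i) (e i)) ((hd.mul_left 2).add (ha.mul_left 2))

end NoiseError

section Minimizer

variable {Λ p q μ CN αstar : ℝ} {lam xdag ω e : ℕ → ℝ}

lemma ydCoeff_eq_add (lam xdag e : ℕ → ℝ) : ydCoeff lam xdag e = yCoeff lam xdag + e := rfl

lemma eta_sq (hlam : ∀ i, 0 < lam i) (e : ℕ → ℝ) (p : ℝ) :
    eta lam e p ^ 2 = etaSq lam e p :=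
  Real.sq_sqrt (tsum_nonneg fun i => mul_nonneg (Real.rpow_nonneg (hlam i).le _) (sq_nonneg _))

lemma totalErrSq_le_psiHDsq (hlam : ∀ i, 0 < lam i) (hα : αstar ∈ Set.Ioo 0 Λ) (hp : 0 ≤ p)
    (hpq : p ≤ q) (hqp : q ≤ p + 1) (hμ : μ ∈ Set.Icc (0 : ℝ) 1) (hqμ : q ≤ 1 / 2 - μ)
    (hsrc : ∀ i, xdag i = lam i ^ μ * ω i) (hω : Summable fun i => ω i ^ 2)
    (he : Summable fun i => lam i ^ (2 * p) * e i ^ 2)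
    (hnc : noiseCondC lam e Λ (2 * q) CN) (hCN : 0 ≤ CN) :
    totalErrSq lam xdag e αstar ≤ 2 * (1 + 4 * CN) * psiHDsq lam e q αstar
      + 2 * (αstar ^ (2 * μ) * ∑' i, ω i ^ 2) := by
  have hq : q ≤ 1 / 2 := by linarith [hμ.1]
  have hD := dataErrSq_le hlam hα hp hpq hqp hq he hnc hCN
  have hA := approxErrSq_le hlam hα.1 hsrc hω hμ.1 hμ.2
  have hE := totalErrSq_le (xdag := xdag) hlam (summable_dataErr hlam hα.1 hp hpq hqp hq he)
    (summable_approxErr hlam hα.1 hsrc hω hμ.1 hμ.2)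
  linarith

lemma psiHDsq_ydCoeff_le_of_isMinOn (hlam : ∀ i, 0 < lam i) (hp : 0 ≤ p) (hpq : p ≤ q)
    (hqp : q ≤ p + 1) (hμ : 0 ≤ μ) (hqμ : q ≤ 1 / 2 - μ)
    (hsrc : ∀ i, xdag i = lam i ^ μ * ω i) (hω : Summable fun i => ω i ^ 2)
    (he : Summable fun i => lam i ^ (2 * p) * e i ^ 2)
    (hηΛ : eta lam e p ^ (2 / (2 * μ + 2 * p + 1)) < Λ)
    (hmin : ∀ α ∈ Set.Ioo 0 Λ,
      psiHDsq lam (ydCoeff lam xdag e) q αstar ≤ psiHDsq lam (ydCoeff lam xdag e) q α) :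
    psiHDsq lam (ydCoeff lam xdag e) q αstar
      ≤ (2 * ∑' i, ω i ^ 2 + 2) * eta lam e p ^ (2 * (2 * μ / (2 * μ + 2 * p + 1))) := by
  rw [show 2 * μ + 2 * p + 1 = 2 * μ + (1 + 2 * p) by ring] at hηΛ ⊢
  refine le_mul_rpow_of_forall_le_tradeoff zero_le_two (by linarith) (by linarith)
    (Real.sqrt_nonneg _) hηΛ fun β hβ => ?_
  have hy := summable_hdWeight_mul_yCoeff_sq hlam hβ.1 hsrc hω (hp.trans hpq) hμ hqμ
  have he' := summable_hdWeight_mul_sq_of_summable hlam hβ.1 hpq hqp he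
  have hψy := psiHDsq_yCoeff_le hlam hβ.1 hsrc hω (hp.trans hpq) hμ hqμ
  have hψe := psiHDsq_le_etaSq hlam hβ.1 hpq hqp he
  calc psiHDsq lam (ydCoeff lam xdag e) q αstar ≤ psiHDsq lam (ydCoeff lam xdag e) q β :=
        hmin β hβ
    _ ≤ 2 * psiHDsq lam (yCoeff lam xdag) q β + 2 * psiHDsq lam e q β :=
        psiHDsq_add_le hlam hβ.1 hy he'
    _ ≤ 2 * (∑' i, ω i ^ 2) * β ^ (2 * μ) + 2 * eta lam e p ^ 2 * β ^ (-(1 + 2 * p)) := by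
        rw [eta_sq hlam]; linarith

lemma rpow_le_of_psiHDsq_ydCoeff_le {K c₀ : ℝ} (hlam : ∀ i, 0 < lam i) (hα : 0 < αstar)
    (hp : 0 ≤ p) (hpq : p ≤ q) (hqp : q ≤ p + 1) (hμ : 0 ≤ μ) (hqμ : q ≤ 1 / 2 - μ)
    (hsrc : ∀ i, xdag i = lam i ^ μ * ω i) (hω : Summable fun i => ω i ^ 2)
    (he : Summable fun i => lam i ^ (2 * p) * e i ^ 2) (hη1 : eta lam e p ≤ 1)
    (hK : 0 ≤ K) (hc₀ : 0 < c₀)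
    (hlow : c₀ * αstar ^ (1 - 2 * q) ≤ psiHDsq lam (yCoeff lam xdag) q αstar)
    (hub : psiHDsq lam (ydCoeff lam xdag e) q αstar
      ≤ K * eta lam e p ^ (2 * (2 * μ / (2 * μ + 2 * p + 1)))) :
    αstar ^ (2 * μ) ≤ ((2 * (2 * K) / c₀) ^ (2 * μ / (1 - 2 * q))
        + (2 * 2 / c₀) ^ (2 * μ / (1 - 2 * q + (1 + 2 * p))))
      * eta lam e p ^ (2 * (2 * μ / (2 * μ + 2 * p + 1) * (2 * μ / (1 - 2 * q)))) := by
  rw [show 2 * μ + 2 * p + 1 = 2 * μ + (1 + 2 * p) by ring] at hub ⊢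
  refine rpow_le_mul_rpow_of_le_tradeoff hα (Real.sqrt_nonneg _) hη1 hc₀ (by linarith)
    zero_le_two (by linarith) (by linarith) (by linarith) ?_
  have hy := summable_hdWeight_mul_yCoeff_sq hlam hα hsrc hω (hp.trans hpq) hμ hqμ
  have he' := summable_hdWeight_mul_sq_of_summable hlam hα hpq hqp he
  have hψe := psiHDsq_le_etaSq hlam hα hpq hqp he
  calc c₀ * αstar ^ (1 - 2 * q) ≤ psiHDsq lam (yCoeff lam xdag) q αstar := hlow
    _ ≤ 2 * psiHDsq lam (ydCoeff lam xdag e) q αstar + 2 * psiHDsq lam e q αstar :=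
        psiHDsq_le_add hlam hα hy he'
    _ ≤ 2 * K * eta lam e p ^ (2 * (2 * μ / (2 * μ + (1 + 2 * p))))
        + 2 * eta lam e p ^ 2 * αstar ^ (-(1 + 2 * p)) := by
        rw [eta_sq hlam]; linarith

end Minimizer

theorem exists_totalErrSq_le {Λ p q μ CN : ℝ} {lam xdag ω : ℕ → ℝ}
    (hlam : ∀ i, 0 < lam i ∧ lam i ≤ Λ) (hp : 0 ≤ p) (hμ : μ ∈ Set.Icc (0 : ℝ) 1)
    (hpq : p ≤ q) (hqp : q ≤ p + 1) (hqμ : q ≤ 1 / 2 - μ)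
    (hsrc : ∀ i, xdag i = lam i ^ μ * ω i) (hω : Summable fun i => ω i ^ 2)
    (hx : ∃ i, xdag i ≠ 0) (hCN : 0 ≤ CN) :
    ∃ C > 0, ∀ e : ℕ → ℝ,
      (Summable fun i => lam i ^ (2 * p) * e i ^ 2) →
      noiseCondC lam e Λ (2 * q) CN →
      eta lam e p ≤ 1 → eta lam e p ^ (2 / (2 * μ + 2 * p + 1)) < Λ →
      ∀ αstar ∈ Set.Ioo (0 : ℝ) Λ,
        (∀ α ∈ Set.Ioo (0 : ℝ) Λ,
          psiHDsq lam (ydCoeff lam xdag e) q αstar ≤ psiHDsq lam (ydCoeff lam xdag e) q α) →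
        totalErrSq lam xdag e αstar ≤
          C * eta lam e p ^ (2 * (2 * μ / (2 * μ + 2 * p + 1) * (2 * μ / (1 - 2 * q)))) := by
  have hl : ∀ i, 0 < lam i := fun i => (hlam i).1
  have hq : 0 ≤ q := hp.trans hpq
  obtain ⟨c₀, hc₀, hlow⟩ :=
    exists_pos_mul_rpow_le_psiHDsq_yCoeff hlam hsrc hω hq hμ.1 hqμ hx
  have hS : 0 ≤ ∑' i, ω i ^ 2 := tsum_nonneg fun i => sq_nonneg _
  refine ⟨4 * (1 + 4 * CN) * (2 * ∑' i, ω i ^ 2 + 2)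
    + (4 * (1 + 4 * CN) + 2) * (∑' i, ω i ^ 2)
    * ((2 * (2 * (2 * ∑' i, ω i ^ 2 + 2)) / c₀) ^ (2 * μ / (1 - 2 * q))
      + (2 * 2 / c₀) ^ (2 * μ / (1 - 2 * q + (1 + 2 * p)))) + 1, by positivity, ?_⟩
  intro e he hnc hη1 hηΛ αstar hα hmin
  have hub := psiHDsq_ydCoeff_le_of_isMinOn hl hp hpq hqp hμ.1 hqμ hsrc hω he hηΛ hmin
  have hrate := rpow_le_of_psiHDsq_ydCoeff_le hl hα.1 hp hpq hqp hμ.1 hqμ hsrc hω he hη1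
    (by linarith) hc₀ (hlow αstar hα) hub
  have hψe : psiHDsq lam e q αstar
      ≤ 2 * psiHDsq lam (ydCoeff lam xdag e) q αstar
        + 2 * psiHDsq lam (yCoeff lam xdag) q αstar := by
    have := psiHDsq_le_add hl hα.1 (summable_hdWeight_mul_sq_of_summable hl hα.1 hpq hqp he)
      (summable_hdWeight_mul_yCoeff_sq hl hα.1 hsrc hω hq hμ.1 hqμ)
    rwa [add_comm e, ← ydCoeff_eq_add] at this
  have hψy := psiHDsq_yCoeff_le hl hα.1 hsrc hω hq hμ.1 hqμ
  have hE := totalErrSq_le_psiHDsq hl hα hp hpq hqp hμ hqμ hsrc hω he hnc hCN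
  have hηρ : eta lam e p ^ (2 * (2 * μ / (2 * μ + 2 * p + 1)))
      ≤ eta lam e p ^ (2 * (2 * μ / (2 * μ + 2 * p + 1) * (2 * μ / (1 - 2 * q)))) := by
    have hρ : 0 ≤ 2 * μ / (2 * μ + 2 * p + 1) := by have := hμ.1; positivity
    have htt : 0 ≤ 2 * μ / (1 - 2 * q) := div_nonneg (by linarith [hμ.1]) (by linarith [hμ.1])
    refine Real.rpow_le_rpow_of_exponent_ge' (Real.sqrt_nonneg _) hη1 (by positivity) ?_
    have := mul_le_of_le_one_right hρ
      (div_le_one_of_le₀ (a := 2 * μ) (b := 1 - 2 * q) (by linarith) (by linarith [hμ.1]))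
    linarith
  have hC₁ : 0 ≤ (2 * (2 * (2 * ∑' i, ω i ^ 2 + 2)) / c₀) ^ (2 * μ / (1 - 2 * q))
      + (2 * 2 / c₀) ^ (2 * μ / (1 - 2 * q + (1 + 2 * p))) := by positivity
  set S := ∑' i, ω i ^ 2
  set C₁ := (2 * (2 * (2 * S + 2)) / c₀) ^ (2 * μ / (1 - 2 * q))
      + (2 * 2 / c₀) ^ (2 * μ / (1 - 2 * q + (1 + 2 * p)))
  set η := eta lam e p
  set θ := 2 * (2 * μ / (2 * μ + 2 * p + 1) * (2 * μ / (1 - 2 * q)))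
  have hηθ : 0 ≤ η ^ θ := Real.rpow_nonneg (Real.sqrt_nonneg _) _
  have happrox : αstar ^ (2 * μ) * S ≤ C₁ * η ^ θ * S := by gcongr
  have hnoise :
      psiHDsq lam e q αstar ≤ 2 * ((2 * S + 2) * η ^ θ) + 2 * (C₁ * η ^ θ * S) := by
    have := mul_le_mul_of_nonneg_left hηρ (by linarith : (0 : ℝ) ≤ 2 * S + 2)
    linarith
  calc totalErrSq lam xdag e αstar
      ≤ 2 * (1 + 4 * CN) * psiHDsq lam e q αstar + 2 * (αstar ^ (2 * μ) * S) := hE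
    _ ≤ 2 * (1 + 4 * CN) * (2 * ((2 * S + 2) * η ^ θ) + 2 * (C₁ * η ^ θ * S))
          + 2 * (C₁ * η ^ θ * S) := by gcongr
    _ = (4 * (1 + 4 * CN) * (2 * S + 2) + (4 * (1 + 4 * CN) + 2) * S * C₁) * η ^ θ := by ring
    _ ≤ (4 * (1 + 4 * CN) * (2 * S + 2) + (4 * (1 + 4 * CN) + 2) * S * C₁ + 1) * η ^ θ := by
        exact mul_le_mul_of_nonneg_right (by linarith) hηθ

/-- convergence rate for the modified heuristic discrepancy rule. -/
theorem statement7 (Λ p q μ : ℝ) (hΛ : 0 < Λ) (hp : p ∈ Set.Icc (0 : ℝ) (1 / 2))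
    (hμ : μ ∈ Set.Icc (0 : ℝ) 1)
    (hq1 : p ≤ q) (hq2 : q ≤ p + 1) (hq3 : q ≤ 1 / 2 - μ)
    (lam xdag ω : ℕ → ℝ) (hlam : ∀ i, 0 < lam i ∧ lam i ≤ Λ)
    (hsrc : ∀ i, xdag i = lam i ^ μ * ω i) (hω : Summable fun i => ω i ^ 2)
    (hQy : ∃ i, xdag i ≠ 0)
    (CN : ℝ) (hCN : 0 < CN) :
    ∃ C > 0, ∃ η₀ > 0, ∀ e : ℕ → ℝ,
      (Summable fun i => lam i ^ (2 * p) * e i ^ 2) →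
      noiseCondC lam e Λ (2 * q) CN →
      eta lam e p ≤ η₀ →
      ∀ αstar ∈ Set.Ioo (0 : ℝ) Λ,
        (∀ α ∈ Set.Ioo (0 : ℝ) Λ,
          psiHD lam (ydCoeff lam xdag e) q αstar ≤ psiHD lam (ydCoeff lam xdag e) q α) →
        totalErr lam xdag e αstar ≤
          C * eta lam e p ^ ((2 * μ / (2 * μ + 2 * p + 1)) * (2 * μ / (1 - 2 * q))) := by
  obtain ⟨C, hC, hbound⟩ := exists_totalErrSq_le hlam hp.1 hμ hq1 hq2 hq3 hsrc hω hQy hCN.le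
  have hm : 0 < 2 * μ + 2 * p + 1 := by linarith [hμ.1, hp.1]
  refine ⟨Real.sqrt C, Real.sqrt_pos.2 hC, min 1 ((Λ / 2) ^ ((2 * μ + 2 * p + 1) / 2)),
    lt_min one_pos (Real.rpow_pos_of_pos (half_pos hΛ) _), ?_⟩
  intro e he hnc hη αstar hα hmin
  have hη0 : 0 ≤ eta lam e p := Real.sqrt_nonneg _
  have hηΛ : eta lam e p ^ (2 / (2 * μ + 2 * p + 1)) < Λ :=
    calc eta lam e p ^ (2 / (2 * μ + 2 * p + 1))
        ≤ ((Λ / 2) ^ ((2 * μ + 2 * p + 1) / 2)) ^ (2 / (2 * μ + 2 * p + 1)) :=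
          Real.rpow_le_rpow hη0 (hη.trans (min_le_right _ _)) (by positivity)
      _ = Λ / 2 := by
          rw [← Real.rpow_mul (half_pos hΛ).le,
            div_mul_div_cancel₀' hm.ne', div_self two_ne_zero,
            Real.rpow_one]
      _ < Λ := half_lt_self hΛ
  have hmin' : ∀ α ∈ Set.Ioo (0 : ℝ) Λ,
      psiHDsq lam (ydCoeff lam xdag e) q αstar ≤ psiHDsq lam (ydCoeff lam xdag e) q α :=
    fun α hα' => (Real.sqrt_le_sqrt_iff (psiHDsq_nonneg (fun i => (hlam i).1) hα'.1 _)).1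
      (hmin α hα')
  calc totalErr lam xdag e αstar
      ≤ Real.sqrt
          (C * eta lam e p ^ (2 * (2 * μ / (2 * μ + 2 * p + 1) * (2 * μ / (1 - 2 * q))))) :=
        Real.sqrt_le_sqrt (hbound e he hnc (hη.trans (min_le_left _ _)) hηΛ αstar hα hmin')
    _ = Real.sqrt C * eta lam e p ^ ((2 * μ / (2 * μ + 2 * p + 1)) * (2 * μ / (1 - 2 * q))) := by
        rw [Real.sqrt_mul hC.le, ← rpow_pow_two hη0, Real.sqrt_sq (Real.rpow_nonneg hη0 _)]

end WeakNoise
end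
end

section
/- If p ≤ q ≤ p + 3/2, then there exists C > 0 such that ψ_HR(α, y − y^δ) ≤ C η α^{−(p+1/2)} for all α ∈ (0,‖T‖²). Moreover, if x† satisfies the source condition of order μ and q ≤ 1 − μ, then there exists C > 0 such that ψ_HR(α, y) ≤ C α^μ for all α ∈ (0,‖T‖²). -/
open scoped BigOperators
open Set

noncomputable section

namespace WeakNoise

lemma rpow_mul_rpow_le_add (x y a b : ℝ) (hx : 0 < x) (hy : 0 < y)
    (ha : 0 ≤ a) (hb : 0 ≤ b) : x ^ a * y ^ b ≤ (x + y) ^ (a + b) := by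
  rw [Real.rpow_add (by linarith)]
  exact mul_le_mul (Real.rpow_le_rpow hx.le (by linarith) ha)
    (Real.rpow_le_rpow hy.le (by linarith) hb)
    (Real.rpow_nonneg hy.le b) (Real.rpow_nonneg (by linarith) a)

lemma key3 (x y a b : ℝ) (hx : 0 < x) (hy : 0 < y) (ha : 0 ≤ a) (hb : 0 ≤ b)
    (hab : a + b = 3) : x ^ a * y ^ b ≤ (x + y) ^ (3 : ℕ) := by
  have h := rpow_mul_rpow_le_add x y a b hx hy ha hb
  rwa [hab, show ((3 : ℝ)) = ((3 : ℕ) : ℝ) by norm_num, Real.rpow_natCast] at h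

lemma sqrt_rpow_half (α t : ℝ) (hα : 0 ≤ α) :
    Real.sqrt (α ^ t) = α ^ (t / 2) := by
  rw [Real.sqrt_eq_rpow, ← Real.rpow_mul hα]
  ring_nf

/-- upper bounds for the modified Hanke-Raus functional. -/
theorem statement9 (Λ p q μ : ℝ) (hΛ : 0 < Λ) (hp : p ∈ Set.Icc (0 : ℝ) (1 / 2))
    (hpq : p ≤ q) (hμ : μ ∈ Set.Icc (0 : ℝ) 1)
    (lam xdag e ω : ℕ → ℝ) (hlam : ∀ i, 0 < lam i ∧ lam i ≤ Λ)
    (hsrc : ∀ i, xdag i = lam i ^ μ * ω i) (hω : Summable fun i => ω i ^ 2)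
    (hη : Summable fun i => lam i ^ (2 * p) * e i ^ 2) :
    ((q ≤ p + 3 / 2) → ∃ C > 0, ∀ α ∈ Set.Ioo (0 : ℝ) Λ,
      psiHR lam e q α ≤ C * eta lam e p * α ^ (-(p + 1 / 2))) ∧
    ((q ≤ 1 - μ) → ∃ C > 0, ∀ α ∈ Set.Ioo (0 : ℝ) Λ,
      psiHR lam (yCoeff lam xdag) q α ≤ C * α ^ μ) := by
  obtain ⟨hp0, hp12⟩ := hp
  obtain ⟨hμ0, hμ1⟩ := hμ
  constructor
  · intro hq32
    refine ⟨1, one_pos, fun α hα => ?_⟩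
    obtain ⟨hα0, hαΛ⟩ := hα
    -- termwise bound
    have hterm : ∀ i, lam i ^ (2 * q) * α ^ (2 - 2 * q) * e i ^ 2 / (lam i + α) ^ 3
        ≤ lam i ^ (2 * p) * e i ^ 2 * α ^ (-(2 * p + 1)) := by
      intro i
      obtain ⟨hl, _⟩ := hlam i
      have hLA : 0 < lam i + α := by linarith
      rw [div_le_iff₀ (by positivity)]
      have hk : lam i ^ (2 * q - 2 * p) * α ^ (3 - (2 * q - 2 * p)) ≤ (lam i + α) ^ (3 : ℕ) :=
        key3 _ _ _ _ hl hα0 (by linarith) (by linarith) (by ring)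
      calc lam i ^ (2 * q) * α ^ (2 - 2 * q) * e i ^ 2
          = (lam i ^ (2 * p) * e i ^ 2 * α ^ (-(2 * p + 1))) *
              (lam i ^ (2 * q - 2 * p) * α ^ (3 - (2 * q - 2 * p))) := by
            have e1 : lam i ^ (2 * p) * lam i ^ (2 * q - 2 * p) = lam i ^ (2 * q) := by
              rw [← Real.rpow_add hl]; congr 1; ring
            have e2 : α ^ (-(2 * p + 1)) * α ^ (3 - (2 * q - 2 * p)) = α ^ (2 - 2 * q) := by
              rw [← Real.rpow_add hα0]; congr 1; ring
            rw [← e1, ← e2]; ring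
        _ ≤ (lam i ^ (2 * p) * e i ^ 2 * α ^ (-(2 * p + 1))) * (lam i + α) ^ 3 := by
            apply mul_le_mul_of_nonneg_left hk
            have := Real.rpow_nonneg hl.le (2 * p)
            have := Real.rpow_nonneg hα0.le (-(2 * p + 1))
            positivity
        _ = lam i ^ (2 * p) * e i ^ 2 * α ^ (-(2 * p + 1)) * (lam i + α) ^ 3 := rfl
    have hgsum : Summable fun i => lam i ^ (2 * p) * e i ^ 2 * α ^ (-(2 * p + 1)) :=
      hη.mul_right _
    have hfnn : ∀ i, 0 ≤ lam i ^ (2 * q) * α ^ (2 - 2 * q) * e i ^ 2 / (lam i + α) ^ 3 := by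
      intro i
      obtain ⟨hl, _⟩ := hlam i
      have h1 := Real.rpow_nonneg hl.le (2 * q)
      have h2 := Real.rpow_nonneg hα0.le (2 - 2 * q)
      have hLA : 0 < lam i + α := by linarith
      positivity
    have hfsum : Summable fun i => lam i ^ (2 * q) * α ^ (2 - 2 * q) * e i ^ 2 / (lam i + α) ^ 3 :=
      Summable.of_nonneg_of_le hfnn hterm hgsum
    have hsq : psiHRsq lam e q α ≤ etaSq lam e p * α ^ (-(2 * p + 1)) := by
      unfold psiHRsq etaSq
      rw [← tsum_mul_right]
      exact Summable.tsum_le_tsum hterm hfsum hgsum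
    have : psiHR lam e q α ≤ Real.sqrt (etaSq lam e p * α ^ (-(2 * p + 1))) :=
      Real.sqrt_le_sqrt hsq
    calc psiHR lam e q α ≤ Real.sqrt (etaSq lam e p * α ^ (-(2 * p + 1))) := this
      _ = eta lam e p * α ^ (-(p + 1 / 2)) := by
          have hE : 0 ≤ etaSq lam e p := tsum_nonneg fun i =>
            mul_nonneg (Real.rpow_nonneg (hlam i).1.le _) (sq_nonneg _)
          rw [Real.sqrt_mul hE, sqrt_rpow_half _ _ hα0.le]
          rw [show (-(2 * p + 1)) / 2 = -(p + 1 / 2) by ring]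
          rfl
      _ = 1 * eta lam e p * α ^ (-(p + 1 / 2)) := by ring
  · intro hq1μ
    have hq0 : 0 ≤ q := le_trans hp0 hpq
    refine ⟨1 + Real.sqrt (∑' i, ω i ^ 2), by positivity, fun α hα => ?_⟩
    obtain ⟨hα0, hαΛ⟩ := hα
    have hterm : ∀ i, lam i ^ (2 * q) * α ^ (2 - 2 * q) * (yCoeff lam xdag i) ^ 2 /
        (lam i + α) ^ 3 ≤ ω i ^ 2 * α ^ (2 * μ) := by
      intro i
      obtain ⟨hl, _⟩ := hlam i
      have hLA : 0 < lam i + α := by linarith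
      have hc : (yCoeff lam xdag i) ^ 2 = lam i ^ (2 * μ + 1) * ω i ^ 2 := by
        unfold yCoeff
        rw [hsrc i, mul_pow, mul_pow, Real.sq_sqrt hl.le,
          ← Real.rpow_natCast (lam i ^ μ) 2, ← Real.rpow_mul hl.le,
          show (2 * μ + 1 : ℝ) = μ * 2 + 1 by ring, Real.rpow_add hl, Real.rpow_one]
        ring
      rw [hc, div_le_iff₀ (by positivity)]
      have hk : lam i ^ (2 * q + 2 * μ + 1) * α ^ (2 - 2 * q - 2 * μ) ≤ (lam i + α) ^ (3 : ℕ) :=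
        key3 _ _ _ _ hl hα0 (by linarith) (by linarith) (by ring)
      calc lam i ^ (2 * q) * α ^ (2 - 2 * q) * (lam i ^ (2 * μ + 1) * ω i ^ 2)
          = (ω i ^ 2 * α ^ (2 * μ)) *
              (lam i ^ (2 * q + 2 * μ + 1) * α ^ (2 - 2 * q - 2 * μ)) := by
            have e1 : lam i ^ (2 * q) * lam i ^ (2 * μ + 1) = lam i ^ (2 * q + 2 * μ + 1) := by
              rw [← Real.rpow_add hl]; congr 1; ring
            have e2 : α ^ (2 * μ) * α ^ (2 - 2 * q - 2 * μ) = α ^ (2 - 2 * q) := by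
              rw [← Real.rpow_add hα0]; congr 1; ring
            rw [← e1, ← e2]; ring
        _ ≤ (ω i ^ 2 * α ^ (2 * μ)) * (lam i + α) ^ 3 := by
            apply mul_le_mul_of_nonneg_left hk
            have := Real.rpow_nonneg hα0.le (2 * μ)
            positivity
        _ = ω i ^ 2 * α ^ (2 * μ) * (lam i + α) ^ 3 := rfl
    have hgsum : Summable fun i => ω i ^ 2 * α ^ (2 * μ) := hω.mul_right _
    have hfnn : ∀ i, 0 ≤ lam i ^ (2 * q) * α ^ (2 - 2 * q) * (yCoeff lam xdag i) ^ 2 /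
        (lam i + α) ^ 3 := by
      intro i
      obtain ⟨hl, _⟩ := hlam i
      have h1 := Real.rpow_nonneg hl.le (2 * q)
      have h2 := Real.rpow_nonneg hα0.le (2 - 2 * q)
      have hLA : 0 < lam i + α := by linarith
      positivity
    have hfsum : Summable fun i => lam i ^ (2 * q) * α ^ (2 - 2 * q) *
        (yCoeff lam xdag i) ^ 2 / (lam i + α) ^ 3 :=
      Summable.of_nonneg_of_le hfnn hterm hgsum
    have hsq : psiHRsq lam (yCoeff lam xdag) q α ≤ (∑' i, ω i ^ 2) * α ^ (2 * μ) := by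
      unfold psiHRsq
      rw [← tsum_mul_right]
      exact Summable.tsum_le_tsum hterm hfsum hgsum
    calc psiHR lam (yCoeff lam xdag) q α
        ≤ Real.sqrt ((∑' i, ω i ^ 2) * α ^ (2 * μ)) := Real.sqrt_le_sqrt hsq
      _ = Real.sqrt (∑' i, ω i ^ 2) * α ^ μ := by
          rw [Real.sqrt_mul (tsum_nonneg fun i => by positivity), sqrt_rpow_half _ _ hα0.le,
            show (2 * μ) / 2 = μ by ring]
      _ ≤ (1 + Real.sqrt (∑' i, ω i ^ 2)) * α ^ μ := by
          have := Real.rpow_nonneg hα0.le μ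
          nlinarith [Real.sqrt_nonneg (∑' i, ω i ^ 2)]

end WeakNoise
end
end

section
/- Suppose the noise satisfies condition (regcon) with parameter ε > 0. Then there exists C > 0 such that ‖T(x_α^δ − x_α)‖ ≥ C η α^{−(p − ε/2)} for all α ∈ (0,‖T‖²). -/
open scoped BigOperators
open Set

noncomputable section

namespace WeakNoise

/-- lower bound for `‖T(x_α^δ - x_α)‖` under the noise
condition (regcon). -/
theorem statement13 (Λ p ε : ℝ) (hΛ : 0 < Λ) (hp : p ∈ Set.Icc (0 : ℝ) (1 / 2))
    (hε : 0 < ε)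
    (lam e : ℕ → ℝ) (hlam : ∀ i, 0 < lam i ∧ lam i ≤ Λ)
    (hη : Summable fun i => lam i ^ (2 * p) * e i ^ 2)
    (hreg : ∃ Creg > 0, regconC lam e Λ p ε Creg) :
    ∃ C > 0, ∀ α ∈ Set.Ioo (0 : ℝ) Λ,
      C * eta lam e p * α ^ (-(p - ε / 2)) ≤ TdataErr lam e α := by
  obtain ⟨Creg, hCreg, hregc⟩ := hreg
  refine ⟨Real.sqrt Creg / 2, by positivity, ?_⟩
  intro α hα
  obtain ⟨hα0, hαΛ⟩ := hα
  have hη0 : (0 : ℝ) ≤ etaSq lam e p := by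
    apply tsum_nonneg
    intro i
    have := (hlam i).1
    positivity
  -- summability of the main series
  have hf : Summable fun i => lam i ^ 2 * e i ^ 2 / (lam i + α) ^ 2 := by
    apply Summable.of_nonneg_of_le (fun i => by have := (hlam i).1; positivity)
      (fun i => ?_) (hη.mul_left (Λ ^ (2 - 2 * p) / α ^ 2))
    have hli := (hlam i).1
    have hlΛ := (hlam i).2
    have h1 : lam i ^ 2 * e i ^ 2 / (lam i + α) ^ 2 ≤ lam i ^ 2 * e i ^ 2 / α ^ 2 := by
      rw [div_le_div_iff₀ (by positivity) (by positivity)]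
      have hden : α ^ 2 ≤ (lam i + α) ^ 2 := by nlinarith
      nlinarith [mul_le_mul_of_nonneg_left hden (show (0:ℝ) ≤ lam i ^ 2 * e i ^ 2 by positivity)]
    refine h1.trans ?_
    have h2 : (lam i : ℝ) ^ 2 ≤ Λ ^ (2 - 2 * p) * lam i ^ (2 * p) := by
      have heq : (lam i : ℝ) ^ 2 = lam i ^ (2 - 2 * p) * lam i ^ (2 * p) := by
        rw [← Real.rpow_add hli]
        norm_num [Real.rpow_two]
      rw [heq]
      exact mul_le_mul_of_nonneg_right
        (Real.rpow_le_rpow hli.le hlΛ (by linarith [hp.2]))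
        (Real.rpow_nonneg hli.le _)
    calc lam i ^ 2 * e i ^ 2 / α ^ 2 ≤ Λ ^ (2 - 2 * p) * lam i ^ (2 * p) * e i ^ 2 / α ^ 2 := by
          gcongr
      _ = Λ ^ (2 - 2 * p) / α ^ 2 * (lam i ^ (2 * p) * e i ^ 2) := by ring
  -- pointwise lower bound
  have hpt : ∀ i, (if α < lam i then e i ^ 2 / 4 else 0)
      ≤ lam i ^ 2 * e i ^ 2 / (lam i + α) ^ 2 := by
    intro i
    have hli := (hlam i).1
    split_ifs with h
    · rw [div_le_div_iff₀ (by norm_num) (by positivity)]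
      nlinarith [mul_nonneg (mul_nonneg (sq_nonneg (e i))
        (by linarith : (0:ℝ) ≤ lam i - α)) (by linarith : (0:ℝ) ≤ 3 * lam i + α)]
    · positivity
  have hsum_le : ∑' i, (if α < lam i then e i ^ 2 / 4 else 0)
      ≤ TdataErrSq lam e α := by
    apply Summable.tsum_le_tsum hpt _ hf
    exact Summable.of_nonneg_of_le (fun i => by positivity) hpt hf
  have hquarter : ∑' i, (if α < lam i then e i ^ 2 / 4 else 0)
      = (1 / 4) * ∑' i, (if α < lam i then e i ^ 2 else 0) := by
    rw [← tsum_mul_left]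
    congr 1; ext i; split_ifs <;> ring
  have hlow : Creg * etaSq lam e p / α ^ (2 * p - ε) / 4 ≤ TdataErrSq lam e α := by
    have := hregc α ⟨hα0, hαΛ⟩
    rw [hquarter] at hsum_le
    linarith
  -- now take square roots
  rw [TdataErr]
  have hLHS : (0 : ℝ) ≤ Real.sqrt Creg / 2 * eta lam e p * α ^ (-(p - ε / 2)) := by
    have : (0 : ℝ) ≤ eta lam e p := Real.sqrt_nonneg _
    positivity
  rw [Real.le_sqrt hLHS]
  have hsq : (Real.sqrt Creg / 2 * eta lam e p * α ^ (-(p - ε / 2))) ^ 2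
      = Creg * etaSq lam e p / α ^ (2 * p - ε) / 4 := by
    have h1 : Real.sqrt Creg ^ 2 = Creg := Real.sq_sqrt hCreg.le
    have h2 : eta lam e p ^ 2 = etaSq lam e p := Real.sq_sqrt hη0
    have h3 : (α ^ (-(p - ε / 2)) : ℝ) ^ 2 = (α ^ (2 * p - ε))⁻¹ := by
      rw [← Real.rpow_natCast (α ^ (-(p - ε / 2))) 2, ← Real.rpow_mul hα0.le,
        ← Real.rpow_neg hα0.le]
      norm_num
      ring_nf
    rw [mul_pow, mul_pow, div_pow, h1, h2, h3]
    ring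
  rw [hsq]
  exact hlow
  exact le_trans (by positivity) hlow

end WeakNoise
end
end

section
/- Assume the discretization-independent source condition of order μ with μ ≤ 1/2. Then there exist positive constants (independent of n) such that for all α ∈ (0,‖T_n‖²): ψ_GCV(α, y_n)² ≤ C α^{2μ+1}/ρ(α), ψ_GCV(α, y_n^δ − y_n)² ≤ C δ_n²/ρ(α), and consequently ψ_GCV(α, y_n^δ)² ≤ (1/ρ(α))(C α^{2μ+1} + C δ_n²). -/
open scoped BigOperators
open Set

noncomputable section

namespace GCV

/-! ### Finite-dimensional (spectral) model of the GCV setting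

For each `k`, `T (k) : X → ℝ^(n k)` is described by the eigenvalues
`lam k : Fin (n k) → ℝ` of `T_n T_n*` (equal to those of `T_n* T_n`) with
orthonormal eigenvectors `u i` of `T_n T_n*` and `v i` of `T_n* T_n`.
`e k i = ⟪y_n^δ - y_n, u i⟫` are the noise coefficients and
`xdag k i = ⟪x†, v i⟫` the coefficients of `x†`, so that the exact data
`y_n = T_n x†` has coefficients `√(lam k i) * xdag k i`.  All statements
quantify over the whole family (indexed by `k`), which expresses that the
occurring constants are independent of the dimension `n`. -/

/-- `‖T_n‖² ` (the largest eigenvalue of `T_n T_n*`). -/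
def nrm2 {m : ℕ} (hm : 0 < m) (lam : Fin m → ℝ) : ℝ :=
  Finset.univ.sup' ⟨⟨0, hm⟩, Finset.mem_univ _⟩ lam

/-- the (strong) noise level `δ_n = ‖y_n^δ - y_n‖`. -/
def deltaN {m : ℕ} (e : Fin m → ℝ) : ℝ := Real.sqrt (∑ i, e i ^ 2)

/-- squared weak noise level `η² = ∑ λᵢ^{2p} |⟨y_n^δ - y_n, uᵢ⟩|²`. -/
def etaSq {m : ℕ} (lam e : Fin m → ℝ) (p : ℝ) : ℝ := ∑ i, lam i ^ (2 * p) * e i ^ 2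

/-- weak noise level `η`. -/
def etaN {m : ℕ} (lam e : Fin m → ℝ) (p : ℝ) : ℝ := Real.sqrt (etaSq lam e p)

/-- the GCV weight `ρ(α) = (α/n) tr((T_n T_n* + α I)⁻¹)`. -/
def rho {m : ℕ} (lam : Fin m → ℝ) (α : ℝ) : ℝ := (α / (m : ℝ)) * ∑ i, (lam i + α)⁻¹

/-- squared generalized cross-validation functional
`ψ_GCV(α,z)² = ‖T_n x_α(z) - z‖²/ρ(α) = (∑ α² cᵢ²/(λᵢ+α)²)/ρ(α)`,
where `c` are the spectral coefficients of `z`. -/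
def psiGCVsq {m : ℕ} (lam c : Fin m → ℝ) (α : ℝ) : ℝ :=
  (∑ i, α ^ 2 * c i ^ 2 / (lam i + α) ^ 2) / rho lam α

/-- generalized cross-validation functional `ψ_GCV(α,z)`. -/
def psiGCV {m : ℕ} (lam c : Fin m → ℝ) (α : ℝ) : ℝ := Real.sqrt (psiGCVsq lam c α)

/-- spectral coefficients of the exact data `y_n = T_n x†`. -/
def yC {m : ℕ} (lam xdag : Fin m → ℝ) : Fin m → ℝ := fun i => Real.sqrt (lam i) * xdag i

/-- spectral coefficients of the noisy data `y_n^δ`. -/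
def ydC {m : ℕ} (lam xdag e : Fin m → ℝ) : Fin m → ℝ :=
  fun i => Real.sqrt (lam i) * xdag i + e i

/-- `‖x_α^δ - x†‖ = √(∑ (√λᵢ eᵢ - α xdagᵢ)²/(λᵢ+α)²)`. -/
def totalErr {m : ℕ} (lam xdag e : Fin m → ℝ) (α : ℝ) : ℝ :=
  Real.sqrt (∑ i, (Real.sqrt (lam i) * e i - α * xdag i) ^ 2 / (lam i + α) ^ 2)

/-- condition (regcond3) with parameter `ε > 0` and explicit constant `C`, on the
interval `I = [αmin, ‖T_n‖²]`:
`∑_{λᵢ ≥ α} |⟨y_n^δ - y_n, uᵢ⟩|² ≥ C η²/α^{2p-ε}`. -/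
def regcond3C {m : ℕ} (lam e : Fin m → ℝ) (p ε C amin Lm : ℝ) : Prop :=
  ∀ α ∈ Set.Icc amin Lm,
    C * etaSq lam e p / α ^ (2 * p - ε) ≤ ∑ i, (if α ≤ lam i then e i ^ 2 else 0)

/-- condition (regcond4) with parameter `ε₂ > 0` and explicit constant `C`, on the
interval `I = [αmin, ‖T_n‖²]`:
`∑_{λᵢ ≥ α} λᵢ^{2μ-1} |⟨ω, vᵢ⟩|² ≥ C α^{2μ-1+ε₂}`. -/
def regcond4C {m : ℕ} (lam om : Fin m → ℝ) (mu eps2 C amin Lm : ℝ) : Prop :=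
  ∀ α ∈ Set.Icc amin Lm,
    C * α ^ (2 * mu - 1 + eps2) ≤ ∑ i, (if α ≤ lam i then lam i ^ (2 * mu - 1) * om i ^ 2 else 0)


/-- upper bounds for the GCV functional, with constants
independent of the dimension `n`. -/
theorem statement15 (p μ : ℝ) (hp : p ∈ Set.Icc (0 : ℝ) (1 / 2))
    (hμ0 : 0 ≤ μ) (hμ : μ ≤ 1 / 2)
    (n : ℕ → ℕ) (hn : ∀ k, 0 < n k)
    (lam : ∀ k, Fin (n k) → ℝ) (hlam : ∀ k i, 0 < lam k i)
    (xdag e ω : ∀ k, Fin (n k) → ℝ)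
    (hsrc : ∀ k i, xdag k i = lam k i ^ μ * ω k i)
    (Cω : ℝ) (hCω : 0 < Cω) (hωb : ∀ k, ∑ i, ω k i ^ 2 ≤ Cω ^ 2) :
    ∃ C > 0, ∀ k, ∀ α ∈ Set.Ioo (0 : ℝ) (nrm2 (hn k) (lam k)),
      psiGCVsq (lam k) (yC (lam k) (xdag k)) α ≤ C * α ^ (2 * μ + 1) / rho (lam k) α ∧
      psiGCVsq (lam k) (e k) α ≤ C * deltaN (e k) ^ 2 / rho (lam k) α ∧
      psiGCVsq (lam k) (ydC (lam k) (xdag k) (e k)) α ≤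
        (C * α ^ (2 * μ + 1) + C * deltaN (e k) ^ 2) / rho (lam k) α := by
  refine ⟨2 * (Cω ^ 2 + 1), by positivity, ?_⟩
  intro k α hα
  obtain ⟨hα0, hαL⟩ := hα
  have hρ : 0 < rho (lam k) α := by
    unfold rho
    have hne : (Finset.univ : Finset (Fin (n k))).Nonempty :=
      ⟨⟨0, hn k⟩, Finset.mem_univ _⟩
    have hs : 0 < ∑ i, (lam k i + α)⁻¹ :=
      Finset.sum_pos (fun i _ => by have := hlam k i; positivity) hne
    have hm : (0 : ℝ) < (n k : ℝ) := by exact_mod_cast hn k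
    positivity
  set C : ℝ := 2 * (Cω ^ 2 + 1) with hC
  -- pointwise bound for exact data
  have key1 : ∀ i, α ^ 2 * (yC (lam k) (xdag k) i) ^ 2 / (lam k i + α) ^ 2
      ≤ α ^ (2 * μ + 1) * ω k i ^ 2 := by
    intro i
    have hl := hlam k i
    set L := lam k i with hL
    have hLα : (0 : ℝ) < L + α := by linarith
    have hy2 : (yC (lam k) (xdag k) i) ^ 2 = L ^ (2 * μ + 1) * ω k i ^ 2 := by
      have : yC (lam k) (xdag k) i = Real.sqrt L * (L ^ μ * ω k i) := by
        simp [yC, hsrc k i, hL]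
      rw [this, mul_pow, mul_pow, Real.sq_sqrt hl.le,
        ← Real.rpow_two, ← Real.rpow_mul hl.le,
        show (2 * μ + 1 : ℝ) = μ * 2 + 1 by ring, Real.rpow_add hl, Real.rpow_one]
      ring
    rw [hy2]
    -- core inequality: α^2 * L^(2μ+1) ≤ α^(2μ+1) * (L+α)^2
    have h1 : α ^ (1 - 2 * μ) ≤ (L + α) ^ (1 - 2 * μ) :=
      Real.rpow_le_rpow hα0.le (by linarith) (by linarith)
    have h2 : L ^ (2 * μ + 1) ≤ (L + α) ^ (2 * μ + 1) :=
      Real.rpow_le_rpow hl.le (by linarith) (by linarith)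
    have h3 : α ^ (1 - 2 * μ) * L ^ (2 * μ + 1)
        ≤ (L + α) ^ (1 - 2 * μ) * (L + α) ^ (2 * μ + 1) :=
      mul_le_mul h1 h2 (Real.rpow_nonneg hl.le _) (Real.rpow_nonneg hLα.le _)
    have h4 : (L + α) ^ (1 - 2 * μ) * (L + α) ^ (2 * μ + 1) = (L + α) ^ 2 := by
      rw [← Real.rpow_add hLα, show (1 - 2 * μ) + (2 * μ + 1) = (2:ℝ) by ring,
        Real.rpow_two]
    have hαe : α ^ (2 * μ + 1) * α ^ (1 - 2 * μ) = α ^ 2 := by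
      rw [← Real.rpow_add hα0, show (2 * μ + 1) + (1 - 2 * μ) = (2:ℝ) by ring,
        Real.rpow_two]
    have core : α ^ 2 * L ^ (2 * μ + 1) ≤ α ^ (2 * μ + 1) * (L + α) ^ 2 := by
      calc α ^ 2 * L ^ (2 * μ + 1)
          = α ^ (2 * μ + 1) * (α ^ (1 - 2 * μ) * L ^ (2 * μ + 1)) := by
            rw [← mul_assoc, hαe]
        _ ≤ α ^ (2 * μ + 1) * ((L + α) ^ (1 - 2 * μ) * (L + α) ^ (2 * μ + 1)) := by
            have := Real.rpow_nonneg hα0.le (2 * μ + 1)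
            exact mul_le_mul_of_nonneg_left h3 this
        _ = α ^ (2 * μ + 1) * (L + α) ^ 2 := by rw [h4]
    rw [div_le_iff₀ (by positivity)]
    have hω2 : (0 : ℝ) ≤ ω k i ^ 2 := sq_nonneg _
    calc α ^ 2 * (L ^ (2 * μ + 1) * ω k i ^ 2)
        = (α ^ 2 * L ^ (2 * μ + 1)) * ω k i ^ 2 := by ring
      _ ≤ (α ^ (2 * μ + 1) * (L + α) ^ 2) * ω k i ^ 2 :=
          mul_le_mul_of_nonneg_right core hω2
      _ = α ^ (2 * μ + 1) * ω k i ^ 2 * (L + α) ^ 2 := by ring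
  -- pointwise bound for noise
  have key2 : ∀ i, α ^ 2 * (e k i) ^ 2 / (lam k i + α) ^ 2 ≤ (e k i) ^ 2 := by
    intro i
    have hl := hlam k i
    rw [div_le_iff₀ (by positivity)]
    have hb : α ^ 2 ≤ (lam k i + α) ^ 2 := by nlinarith
    nlinarith [mul_le_mul_of_nonneg_left hb (sq_nonneg (e k i))]
  have hαpow : (0:ℝ) ≤ α ^ (2 * μ + 1) := Real.rpow_nonneg hα0.le _
  -- sum bounds
  have hSy : ∑ i, α ^ 2 * (yC (lam k) (xdag k) i) ^ 2 / (lam k i + α) ^ 2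
      ≤ Cω ^ 2 * α ^ (2 * μ + 1) := by
    calc ∑ i, α ^ 2 * (yC (lam k) (xdag k) i) ^ 2 / (lam k i + α) ^ 2
        ≤ ∑ i, α ^ (2 * μ + 1) * ω k i ^ 2 :=
          Finset.sum_le_sum fun i _ => key1 i
      _ = α ^ (2 * μ + 1) * ∑ i, ω k i ^ 2 := by rw [Finset.mul_sum]
      _ ≤ α ^ (2 * μ + 1) * Cω ^ 2 := mul_le_mul_of_nonneg_left (hωb k) hαpow
      _ = Cω ^ 2 * α ^ (2 * μ + 1) := by ring
  have hδ2 : deltaN (e k) ^ 2 = ∑ i, e k i ^ 2 := by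
    rw [deltaN, Real.sq_sqrt (Finset.sum_nonneg fun i _ => sq_nonneg _)]
  have hSe : ∑ i, α ^ 2 * (e k i) ^ 2 / (lam k i + α) ^ 2 ≤ deltaN (e k) ^ 2 := by
    rw [hδ2]; exact Finset.sum_le_sum fun i _ => key2 i
  have hδnn : (0:ℝ) ≤ deltaN (e k) ^ 2 := sq_nonneg _
  constructor
  · -- exact data bound
    rw [psiGCVsq, div_le_div_iff_of_pos_right hρ]
    calc ∑ i, α ^ 2 * (yC (lam k) (xdag k) i) ^ 2 / (lam k i + α) ^ 2
        ≤ Cω ^ 2 * α ^ (2 * μ + 1) := hSy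
      _ ≤ C * α ^ (2 * μ + 1) := by
          apply mul_le_mul_of_nonneg_right _ hαpow
          rw [hC]; nlinarith
  constructor
  · rw [psiGCVsq, div_le_div_iff_of_pos_right hρ]
    calc ∑ i, α ^ 2 * (e k i) ^ 2 / (lam k i + α) ^ 2
        ≤ deltaN (e k) ^ 2 := hSe
      _ ≤ C * deltaN (e k) ^ 2 := by
          apply le_mul_of_one_le_left hδnn
          rw [hC]; nlinarith
  · rw [psiGCVsq, div_le_div_iff_of_pos_right hρ]
    have hsplit : ∀ i, α ^ 2 * (ydC (lam k) (xdag k) (e k) i) ^ 2 / (lam k i + α) ^ 2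
        ≤ 2 * (α ^ 2 * (yC (lam k) (xdag k) i) ^ 2 / (lam k i + α) ^ 2)
          + 2 * (α ^ 2 * (e k i) ^ 2 / (lam k i + α) ^ 2) := by
      intro i
      have hl := hlam k i
      have hpos : (0:ℝ) < (lam k i + α) ^ 2 := by positivity
      have hyd : ydC (lam k) (xdag k) (e k) i = yC (lam k) (xdag k) i + e k i := by
        simp [ydC, yC]
      rw [hyd]
      have hsq : (yC (lam k) (xdag k) i + e k i) ^ 2
          ≤ 2 * (yC (lam k) (xdag k) i) ^ 2 + 2 * (e k i) ^ 2 := by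
        nlinarith [sq_nonneg (yC (lam k) (xdag k) i - e k i)]
      have h2 : 2 * (α ^ 2 * (yC (lam k) (xdag k) i) ^ 2 / (lam k i + α) ^ 2)
          + 2 * (α ^ 2 * (e k i) ^ 2 / (lam k i + α) ^ 2)
          = (2 * (α ^ 2 * (yC (lam k) (xdag k) i) ^ 2)
            + 2 * (α ^ 2 * (e k i) ^ 2)) / (lam k i + α) ^ 2 := by
        field_simp
      rw [h2, div_le_div_iff_of_pos_right hpos]
      nlinarith [sq_nonneg α]
    calc ∑ i, α ^ 2 * (ydC (lam k) (xdag k) (e k) i) ^ 2 / (lam k i + α) ^ 2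
        ≤ ∑ i, (2 * (α ^ 2 * (yC (lam k) (xdag k) i) ^ 2 / (lam k i + α) ^ 2)
          + 2 * (α ^ 2 * (e k i) ^ 2 / (lam k i + α) ^ 2)) :=
          Finset.sum_le_sum fun i _ => hsplit i
      _ = 2 * (∑ i, α ^ 2 * (yC (lam k) (xdag k) i) ^ 2 / (lam k i + α) ^ 2)
          + 2 * (∑ i, α ^ 2 * (e k i) ^ 2 / (lam k i + α) ^ 2) := by
          rw [Finset.sum_add_distrib, Finset.mul_sum, Finset.mul_sum]
      _ ≤ 2 * (Cω ^ 2 * α ^ (2 * μ + 1)) + 2 * deltaN (e k) ^ 2 := by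
          have := mul_le_mul_of_nonneg_left hSy (by norm_num : (0:ℝ) ≤ 2)
          have := mul_le_mul_of_nonneg_left hSe (by norm_num : (0:ℝ) ≤ 2)
          linarith [mul_le_mul_of_nonneg_left hSy (by norm_num : (0:ℝ) ≤ 2),
            mul_le_mul_of_nonneg_left hSe (by norm_num : (0:ℝ) ≤ 2)]
      _ ≤ C * α ^ (2 * μ + 1) + C * deltaN (e k) ^ 2 := by
          rw [hC]
          nlinarith [hαpow, hδnn, mul_nonneg (sq_nonneg Cω) hδnn]

end GCV
end
end

section
/- Let γ > 0, ν ≥ 0, τ > 0 and β ∈ ℝ with β < γ + 1. Then there exists C > 0 such that for all α ∈ (0,1]: α^{ν+1} · τ · Σ_{i ≥ 1, i^{−γ} ≥ α} i^{γ−β} ≤ C · τ · Σ_{i ≥ 1, i^{−γ} < α} i^{−(γν+β)}, where both sides are taken in [0,∞] (the right-hand side may be +∞). In particular, if TT* has eigenvalues λ_i = i^{−γ} with orthonormal eigenfunctions u_i and the noise satisfies |⟨y^δ − y, u_i⟩|² = τ i^{−β} for all i ≥ 1, then y^δ − y belongs to the noise class N_ν. -/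
open scoped BigOperators
open Set ENNReal

noncomputable section

namespace NoiseExample

/-! ### Statement 19

`T T*` has eigenvalues `λ_i = i^{-γ}` (for `i ≥ 1`, modelled by `i + 1` for
`i : ℕ`) with orthonormal eigenfunctions `u_i`, and the noise `e = y^δ - y`
satisfies `|⟨e, u_i⟩|² = τ i^{-β}`.  Then `‖T‖² = sup_i λ_i = 1`.  General
spectral sums are interpreted as `∫_a^b λ^s d‖F_λ e‖² = ∑_{a < λ_i ≤ b} λ_i^s
|⟨e,u_i⟩|²`, taken in `[0,∞]`.  Membership of `e` in the noise class `N_ν`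
(see below) is expressed accordingly with values in `[0,∞]`. -/

/-- the `i`-th eigenvalue `λ_i = i^{-γ}` of `T T*` (for `i ≥ 1`). -/
def lamP (γ : ℝ) (i : ℕ) : ℝ := ((i : ℝ) + 1) ^ (-γ)

/-- membership of the noise in the class `N_ν` (with `‖T‖² = 1`), with all
spectral sums taken in `[0,∞]`:
`α^{ν+1} ∑_{λ_i > α} λ_i⁻¹ |⟨e,u_i⟩|² ≤ C ∑_{λ_i ≤ α} λ_i^ν |⟨e,u_i⟩|²`
for all `α ∈ (0,1)`, where `|⟨e,u_i⟩|² = τ i^{-β}`. -/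
def memNexample (γ ν τ β : ℝ) : Prop :=
  ∃ C > 0, ∀ α ∈ Set.Ioo (0 : ℝ) 1,
    ENNReal.ofReal (α ^ (ν + 1)) *
        ∑' i : ℕ, (if α < lamP γ i then
          ENNReal.ofReal ((lamP γ i)⁻¹ * (τ * ((i : ℝ) + 1) ^ (-β))) else 0)
      ≤ ENNReal.ofReal C *
        ∑' i : ℕ, (if lamP γ i ≤ α then
          ENNReal.ofReal ((lamP γ i) ^ ν * (τ * ((i : ℝ) + 1) ^ (-β))) else 0)

/-! With `M = ⌊α ^ (-1/γ)⌋`, the condition `α ≤ (i + 1) ^ (-γ)` says exactly `i < M`, and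
`α ≤ M ^ (-γ)`. Since `γ - β > -1`, the left sum is `∑_{i < M} (i + 1) ^ (γ - β) ≲ M ^ (γ - β + 1)`,
so the left side is `≲ M ^ (-γ (ν + 1)) M ^ (γ - β + 1) = M ^ (1 - γ ν - β)`. The right sum is at
least its block `M ≤ i < 2M`, whose terms are all comparable to `M ^ (-(γ ν + β))`, so it is
`≳ M ^ (1 - γ ν - β)` as well. The noise condition is the same inequality with `τ` factored out
of `|⟨e, u_i⟩|² = τ i ^ (-β)`. -/

open Finset

lemma mul_rpow_sub_one_le_rpow_sub_rpow {q y : ℝ} (hq₀ : 0 ≤ q) (hq₁ : q ≤ 1) (hy : 0 ≤ y) :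
    q * (y + 1) ^ (q - 1) ≤ (y + 1) ^ q - y ^ q := by
  have hx : 0 < y + 1 := by linarith
  have hs : -1 ≤ -(y + 1)⁻¹ := neg_le_neg (inv_le_one_of_one_le₀ (by linarith))
  have hsplit : y ^ q = (y + 1) ^ q * (1 + -(y + 1)⁻¹) ^ q := by
    rw [← Real.mul_rpow hx.le (by linarith)]
    congr 1; field_simp; ring
  have hbern := rpow_one_add_le_one_add_mul_self hs hq₀ hq₁
  calc q * (y + 1) ^ (q - 1) = (y + 1) ^ q - (y + 1) ^ q * (1 + q * -(y + 1)⁻¹) := by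
        rw [Real.rpow_sub_one hx.ne']; ring
    _ ≤ (y + 1) ^ q - y ^ q := by
        rw [hsplit]; gcongr

lemma sum_range_rpow_le {p : ℝ} (hp : -1 < p) (M : ℕ) :
    ∑ i ∈ range M, ((i : ℝ) + 1) ^ p ≤ (1 + 1 / (p + 1)) * (M : ℝ) ^ (p + 1) := by
  have hp₁ : 0 < p + 1 := by linarith
  have hMp : 0 ≤ (M : ℝ) ^ (p + 1) := by positivity
  rcases le_or_gt 0 p with hp₀ | hp₀
  · calc ∑ i ∈ range M, ((i : ℝ) + 1) ^ p ≤ ∑ _i ∈ range M, (M : ℝ) ^ p := by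
          gcongr with i hi
          exact_mod_cast mem_range.mp hi
      _ = (M : ℝ) ^ (p + 1) := by
          rw [sum_const, card_range, nsmul_eq_mul, Real.rpow_add' (by positivity) hp₁.ne',
            Real.rpow_one, mul_comm]
      _ ≤ (1 + 1 / (p + 1)) * (M : ℝ) ^ (p + 1) :=
          le_mul_of_one_le_left hMp (by simp [hp₁.le])
  · have htele : (p + 1) * ∑ i ∈ range M, ((i : ℝ) + 1) ^ p ≤ (M : ℝ) ^ (p + 1) :=
      calc (p + 1) * ∑ i ∈ range M, ((i : ℝ) + 1) ^ p
          ≤ ∑ i ∈ range M, (((i + 1 : ℕ) : ℝ) ^ (p + 1) - ((i : ℕ) : ℝ) ^ (p + 1)) := by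
            rw [mul_sum]
            gcongr with i
            push_cast
            simpa using mul_rpow_sub_one_le_rpow_sub_rpow hp₁.le (by linarith) i.cast_nonneg
        _ = (M : ℝ) ^ (p + 1) := by
            rw [sum_range_sub (fun i : ℕ => (i : ℝ) ^ (p + 1))]
            simp [Real.zero_rpow hp₁.ne']
    calc ∑ i ∈ range M, ((i : ℝ) + 1) ^ p ≤ 1 / (p + 1) * (M : ℝ) ^ (p + 1) := by
          rw [div_mul_eq_mul_div, one_mul, le_div_iff₀ hp₁]; linarith
      _ ≤ (1 + 1 / (p + 1)) * (M : ℝ) ^ (p + 1) := by gcongr; linarith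

lemma two_rpow_neg_abs_mul_rpow_le {a x : ℝ} (ha : 0 < a) (hax : a ≤ x) (hx : x ≤ 2 * a) (t : ℝ) :
    2 ^ (-|t|) * a ^ t ≤ x ^ t := by
  rcases le_or_gt 0 t with ht | ht
  · calc 2 ^ (-|t|) * a ^ t ≤ 1 * a ^ t := by
          gcongr
          exact Real.rpow_le_one_of_one_le_of_nonpos one_le_two (by simp)
      _ ≤ x ^ t := by rw [one_mul]; gcongr
  · calc 2 ^ (-|t|) * a ^ t = (2 * a) ^ t := by
          rw [abs_of_neg ht, neg_neg, Real.mul_rpow zero_le_two ha.le]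
      _ ≤ x ^ t := Real.rpow_le_rpow_of_nonpos (by linarith) hx ht.le

lemma two_rpow_neg_abs_mul_le_sum_Ico {M : ℕ} (hM : 0 < M) (t : ℝ) :
    2 ^ (-|t|) * (M : ℝ) ^ (t + 1) ≤ ∑ i ∈ Finset.Ico M (2 * M), ((i : ℝ) + 1) ^ t := by
  have hM' : (0 : ℝ) < M := by exact_mod_cast hM
  have hterm : ∀ i ∈ Finset.Ico M (2 * M), 2 ^ (-|t|) * (M : ℝ) ^ t ≤ ((i : ℝ) + 1) ^ t := by
    intro i hi
    obtain ⟨hMi, hi2M⟩ := Finset.mem_Ico.mp hi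
    refine two_rpow_neg_abs_mul_rpow_le hM' ?_ ?_ t
    · have : (M : ℝ) ≤ i := by exact_mod_cast hMi
      linarith
    · exact_mod_cast hi2M
  calc 2 ^ (-|t|) * (M : ℝ) ^ (t + 1)
      = (Finset.Ico M (2 * M)).card • (2 ^ (-|t|) * (M : ℝ) ^ t) := by
        rw [Nat.card_Ico, show 2 * M - M = M by omega, nsmul_eq_mul, Real.rpow_add_one hM'.ne']
        ring
    _ ≤ ∑ i ∈ Finset.Ico M (2 * M), ((i : ℝ) + 1) ^ t := card_nsmul_le_sum _ _ _ hterm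

lemma rpow_mul_sum_range_le_mul_sum_Ico {γ ν β α : ℝ} (hν : 0 ≤ ν + 1) (hβ : β < γ + 1)
    (hα : 0 ≤ α) {M : ℕ} (hM : 0 < M) (hαM : α ≤ (M : ℝ) ^ (-γ)) :
    α ^ (ν + 1) * ∑ i ∈ range M, ((i : ℝ) + 1) ^ (γ - β)
      ≤ (1 + 1 / (γ - β + 1)) * 2 ^ |γ * ν + β| *
          ∑ i ∈ Finset.Ico M (2 * M), ((i : ℝ) + 1) ^ (-(γ * ν + β)) := by
  have hM' : (0 : ℝ) < M := by exact_mod_cast hM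
  have hc : 0 ≤ 1 + 1 / (γ - β + 1) := by
    have := one_div_pos.mpr (show 0 < γ - β + 1 by linarith); linarith
  have hexp : -γ * (ν + 1) + (γ - β + 1) = -(γ * ν + β) + 1 := by ring
  calc α ^ (ν + 1) * ∑ i ∈ range M, ((i : ℝ) + 1) ^ (γ - β)
      ≤ ((M : ℝ) ^ (-γ)) ^ (ν + 1) * ((1 + 1 / (γ - β + 1)) * (M : ℝ) ^ (γ - β + 1)) := by
        gcongr
        exact sum_range_rpow_le (by linarith) M
    _ = (1 + 1 / (γ - β + 1)) * 2 ^ |γ * ν + β| *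
          (2 ^ (-|-(γ * ν + β)|) * (M : ℝ) ^ (-(γ * ν + β) + 1)) := by
        rw [← Real.rpow_mul hM'.le, mul_left_comm, ← Real.rpow_add hM', hexp, abs_neg,
          Real.rpow_neg zero_le_two]
        field_simp
    _ ≤ _ := by
        gcongr
        exact two_rpow_neg_abs_mul_le_sum_Ico hM _

lemma le_rpow_neg_iff_lt_floor {γ α : ℝ} (hγ : 0 < γ) (hα : 0 < α) (i : ℕ) :
    α ≤ ((i : ℝ) + 1) ^ (-γ) ↔ i < ⌊α ^ (-γ)⁻¹⌋₊ := by
  rw [← Real.le_rpow_inv_iff_of_neg (by positivity) hα (neg_lt_zero.mpr hγ),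
    Nat.lt_iff_add_one_le, Nat.le_floor_iff (by positivity)]
  push_cast; rfl

lemma tsum_ite_lt_eq_sum_range {A : Type*} [AddCommMonoid A] [TopologicalSpace A]
    (f : ℕ → A) (M : ℕ) : ∑' i, (if i < M then f i else 0) = ∑ i ∈ range M, f i := by
  rw [tsum_eq_sum (s := range M) fun i hi => if_neg (by simpa using hi)]
  exact sum_congr rfl fun i hi => if_pos (mem_range.mp hi)

theorem exists_rpow_mul_tsum_le {γ ν β : ℝ} (hγ : 0 < γ) (hν : 0 ≤ ν + 1) (hβ : β < γ + 1) :
    ∃ C > 0, ∀ α ∈ Ioc (0 : ℝ) 1,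
      ENNReal.ofReal (α ^ (ν + 1)) *
          ∑' i : ℕ, (if α ≤ ((i : ℝ) + 1) ^ (-γ) then
            ENNReal.ofReal (((i : ℝ) + 1) ^ (γ - β)) else 0)
        ≤ ENNReal.ofReal C *
          ∑' i : ℕ, (if ((i : ℝ) + 1) ^ (-γ) < α then
            ENNReal.ofReal (((i : ℝ) + 1) ^ (-(γ * ν + β))) else 0) := by
  have hc : 0 < 1 + 1 / (γ - β + 1) := by
    have := one_div_pos.mpr (show 0 < γ - β + 1 by linarith); linarith
  refine ⟨(1 + 1 / (γ - β + 1)) * 2 ^ |γ * ν + β|, by positivity, fun α ⟨hα₀, hα₁⟩ => ?_⟩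
  set M := ⌊α ^ (-γ)⁻¹⌋₊
  have hiff := le_rpow_neg_iff_lt_floor hγ hα₀
  have hM : 0 < M := (hiff 0).mp (by simpa using hα₁)
  have hαM : α ≤ (M : ℝ) ^ (-γ) :=
    (Real.le_rpow_inv_iff_of_neg (by exact_mod_cast hM) hα₀ (neg_lt_zero.mpr hγ)).mp
      (Nat.floor_le (by positivity))
  have hleft : ∑' i : ℕ, (if α ≤ ((i : ℝ) + 1) ^ (-γ) then
      ENNReal.ofReal (((i : ℝ) + 1) ^ (γ - β)) else 0)
      = ENNReal.ofReal (∑ i ∈ range M, ((i : ℝ) + 1) ^ (γ - β)) := by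
    simp_rw [hiff]
    rw [tsum_ite_lt_eq_sum_range, ENNReal.ofReal_sum_of_nonneg fun i _ => by positivity]
  have hright : ENNReal.ofReal (∑ i ∈ Finset.Ico M (2 * M), ((i : ℝ) + 1) ^ (-(γ * ν + β)))
      ≤ ∑' i : ℕ, (if ((i : ℝ) + 1) ^ (-γ) < α then
        ENNReal.ofReal (((i : ℝ) + 1) ^ (-(γ * ν + β))) else 0) := by
    rw [ENNReal.ofReal_sum_of_nonneg fun i _ => by positivity]
    refine le_trans (le_of_eq (sum_congr rfl fun i hi => ?_)) (ENNReal.sum_le_tsum _)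
    rw [if_pos (not_le.mp fun h => (Finset.mem_Ico.mp hi).1.not_gt ((hiff i).mp h))]
  rw [hleft, ← ENNReal.ofReal_mul (by positivity)]
  calc _ ≤ ENNReal.ofReal ((1 + 1 / (γ - β + 1)) * 2 ^ |γ * ν + β| *
          ∑ i ∈ Finset.Ico M (2 * M), ((i : ℝ) + 1) ^ (-(γ * ν + β))) :=
        ENNReal.ofReal_le_ofReal (rpow_mul_sum_range_le_mul_sum_Ico hν hβ hα₀.le hM hαM)
    _ ≤ _ := by
        rw [ENNReal.ofReal_mul (by positivity)]
        gcongr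

lemma lamP_inv_mul (γ β τ : ℝ) (i : ℕ) :
    (lamP γ i)⁻¹ * (τ * ((i : ℝ) + 1) ^ (-β)) = ((i : ℝ) + 1) ^ (γ - β) * τ := by
  rw [lamP, ← Real.rpow_neg (by positivity), neg_neg, sub_eq_add_neg,
    Real.rpow_add (by positivity)]
  ring

lemma lamP_rpow_mul (γ ν β τ : ℝ) (i : ℕ) :
    lamP γ i ^ ν * (τ * ((i : ℝ) + 1) ^ (-β)) = ((i : ℝ) + 1) ^ (-(γ * ν + β)) * τ := by
  rw [lamP, ← Real.rpow_mul (by positivity), neg_add, ← neg_mul,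
    Real.rpow_add (by positivity)]
  ring

lemma ite_le_ite_of_imp {A : Type*} [Zero A] [Preorder A] {p q : Prop} [Decidable p]
    [Decidable q] (h : p → q) {a : A} (ha : 0 ≤ a) :
    (if p then a else 0) ≤ if q then a else 0 := by
  split_ifs with hp hq
  exacts [le_rfl, absurd (h hp) hq, ha, le_rfl]

lemma tsum_inv_lamP_le (γ β τ α : ℝ) :
    ∑' i : ℕ, (if α < lamP γ i then
        ENNReal.ofReal ((lamP γ i)⁻¹ * (τ * ((i : ℝ) + 1) ^ (-β))) else 0)
      ≤ (∑' i : ℕ, if α ≤ ((i : ℝ) + 1) ^ (-γ) then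
        ENNReal.ofReal (((i : ℝ) + 1) ^ (γ - β)) else 0) * ENNReal.ofReal τ := by
  rw [← ENNReal.tsum_mul_right]
  refine ENNReal.tsum_le_tsum fun i => ?_
  rw [lamP_inv_mul, ENNReal.ofReal_mul (by positivity), ite_mul, zero_mul]
  exact ite_le_ite_of_imp le_of_lt zero_le

lemma le_tsum_lamP_rpow (γ ν β τ α : ℝ) :
    (∑' i : ℕ, if ((i : ℝ) + 1) ^ (-γ) < α then
        ENNReal.ofReal (((i : ℝ) + 1) ^ (-(γ * ν + β))) else 0) * ENNReal.ofReal τ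
      ≤ ∑' i : ℕ, (if lamP γ i ≤ α then
        ENNReal.ofReal ((lamP γ i) ^ ν * (τ * ((i : ℝ) + 1) ^ (-β))) else 0) := by
  rw [← ENNReal.tsum_mul_right]
  refine ENNReal.tsum_le_tsum fun i => ?_
  rw [lamP_rpow_mul, ENNReal.ofReal_mul (by positivity), ite_mul, zero_mul]
  exact ite_le_ite_of_imp le_of_lt zero_le

theorem statement19_general (γ ν τ β : ℝ) (hγ : 0 < γ) (hν : 0 ≤ ν) (hβ : β < γ + 1) :
    (∃ C > 0, ∀ α ∈ Set.Ioc (0 : ℝ) 1,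
      ENNReal.ofReal (α ^ (ν + 1) * τ) *
          ∑' i : ℕ, (if α ≤ ((i : ℝ) + 1) ^ (-γ) then
            ENNReal.ofReal (((i : ℝ) + 1) ^ (γ - β)) else 0)
        ≤ ENNReal.ofReal (C * τ) *
          ∑' i : ℕ, (if ((i : ℝ) + 1) ^ (-γ) < α then
            ENNReal.ofReal (((i : ℝ) + 1) ^ (-(γ * ν + β))) else 0)) ∧
    memNexample γ ν τ β := by
  obtain ⟨C, hC, hbound⟩ := exists_rpow_mul_tsum_le hγ (by linarith : 0 ≤ ν + 1) hβ
  refine ⟨⟨C, hC, fun α hα => ?_⟩, C, hC, fun α hα => ?_⟩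
  · rw [ENNReal.ofReal_mul (Real.rpow_nonneg hα.1.le _), ENNReal.ofReal_mul hC.le, mul_right_comm,
      mul_right_comm (ENNReal.ofReal C)]
    exact mul_le_mul_left (hbound α hα) _
  · calc _ ≤ _ := mul_le_mul_right (tsum_inv_lamP_le γ β τ α) _
      _ = _ := (mul_assoc _ _ _).symm
      _ ≤ _ := mul_le_mul_left (hbound α ⟨hα.1, hα.2.le⟩) _
      _ = _ := mul_assoc _ _ _
      _ ≤ _ := mul_le_mul_right (le_tsum_lamP_rpow γ ν β τ α) _

/-- the polynomial example satisfies the noise condition. -/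
theorem statement19 (γ ν τ β : ℝ) (hγ : 0 < γ) (hν : 0 ≤ ν) (hτ : 0 < τ)
    (hβ : β < γ + 1) :
    (∃ C > 0, ∀ α ∈ Set.Ioc (0 : ℝ) 1,
      ENNReal.ofReal (α ^ (ν + 1) * τ) *
          ∑' i : ℕ, (if α ≤ ((i : ℝ) + 1) ^ (-γ) then
            ENNReal.ofReal (((i : ℝ) + 1) ^ (γ - β)) else 0)
        ≤ ENNReal.ofReal (C * τ) *
          ∑' i : ℕ, (if ((i : ℝ) + 1) ^ (-γ) < α then
            ENNReal.ofReal (((i : ℝ) + 1) ^ (-(γ * ν + β))) else 0)) ∧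
    memNexample γ ν τ β :=
  statement19_general γ ν τ β hγ hν hβ

end NoiseExample
end
end
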